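/- arXiv:2411.00951 — 6 statements merged into one kernel-verified Lean document; each statement's English description precedes it below -/
import Mathlib

section
/- Let W be a tensor with output indices I'_A, O_A, I'_B, O_B and input indices I_A, O'_A, I_B, O'_B, all ranging over finite nonempty sets. Then the following are equivalent: (i) for every choice of finite nonempty classical sets X, A, Y, B and every pair of sets of probabilistic local operations T^{A|X} on Alice's wires (incoming (I'_A, O_A), outgoing (I_A, O'_A)) and T^{B|Y} on Bob's wires (incoming (I'_B, O_B), outgoing (I_B, O'_B)), the contraction (T^{A|X} ⊗ T^{B|Y}) * W over all eight wire indices is a conditional probability distribution, i.e. it is nonnegative and for each (x, y) its entries sum over (a, b) to 1; (ii) W is a bipartite process tensor, i.e. W ≥ 0, r(W) = d_{I_A}·d_{O'_A}·d_{I_B}·d_{O'_B}, _{𝔸(1−O'_B+O_BO'_B−I_BO_BO'_B)}W = 0, _{(1−O'_A+O_AO'_A−I_AO_AO'_A)𝔹}W = 0, and _{(1−O'_A+O_AO'_A−I_AO_AO'_A)(1−O'_B+O_BO'_B−I_BO_BO'_B)}W = 0, where 𝔸 := I'_A I_A O_A O'_A and 𝔹 := I'_B I_B O_B O'_B. -/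
open Finset
open scoped Classical

noncomputable section

namespace Boxworld

/-- A bipartite 8-wire tensor `W(i'_A, o_A, i'_B, o_B | i_A, o'_A, i_B, o'_B)`,
with output indices `IA' OA IB' OB` and input indices `IA OA' IB OB'`. -/
abbrev WTen (IA' OA IB' OB IA OA' IB OB' : Type) : Type :=
  IA' → OA → IB' → OB → IA → OA' → IB → OB' → ℝ

/-- A local-operation tensor `T(i, o' | i', o)`, argument order `(i', o, i, o')`. -/
abbrev OpTen (I' O I O' : Type) : Type := I' → O → I → O' → ℝ

section WireDefs

variable {IA' OA IB' OB IA OA' IB OB' : Type}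
variable [Fintype IA'] [Fintype OA] [Fintype IB'] [Fintype OB]
variable [Fintype IA] [Fintype OA'] [Fintype IB] [Fintype OB']

/-- Reduce-and-replace over the index `IA'`. -/
def rrIA' (W : WTen IA' OA IB' OB IA OA' IB OB') : WTen IA' OA IB' OB IA OA' IB OB' :=
  fun _ oa ib' ob ia oa' ib ob' => (∑ j, W j oa ib' ob ia oa' ib ob') / (Fintype.card IA' : ℝ)

/-- Reduce-and-replace over the index `OA`. -/
def rrOA (W : WTen IA' OA IB' OB IA OA' IB OB') : WTen IA' OA IB' OB IA OA' IB OB' :=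
  fun ia' _ ib' ob ia oa' ib ob' => (∑ j, W ia' j ib' ob ia oa' ib ob') / (Fintype.card OA : ℝ)

/-- Reduce-and-replace over the index `IB'`. -/
def rrIB' (W : WTen IA' OA IB' OB IA OA' IB OB') : WTen IA' OA IB' OB IA OA' IB OB' :=
  fun ia' oa _ ob ia oa' ib ob' => (∑ j, W ia' oa j ob ia oa' ib ob') / (Fintype.card IB' : ℝ)

/-- Reduce-and-replace over the index `OB`. -/
def rrOB (W : WTen IA' OA IB' OB IA OA' IB OB') : WTen IA' OA IB' OB IA OA' IB OB' :=
  fun ia' oa ib' _ ia oa' ib ob' => (∑ j, W ia' oa ib' j ia oa' ib ob') / (Fintype.card OB : ℝ)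

/-- Reduce-and-replace over the index `IA`. -/
def rrIA (W : WTen IA' OA IB' OB IA OA' IB OB') : WTen IA' OA IB' OB IA OA' IB OB' :=
  fun ia' oa ib' ob _ oa' ib ob' => (∑ j, W ia' oa ib' ob j oa' ib ob') / (Fintype.card IA : ℝ)

/-- Reduce-and-replace over the index `OA'`. -/
def rrOA' (W : WTen IA' OA IB' OB IA OA' IB OB') : WTen IA' OA IB' OB IA OA' IB OB' :=
  fun ia' oa ib' ob ia _ ib ob' => (∑ j, W ia' oa ib' ob ia j ib ob') / (Fintype.card OA' : ℝ)

/-- Reduce-and-replace over the index `IB`. -/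
def rrIB (W : WTen IA' OA IB' OB IA OA' IB OB') : WTen IA' OA IB' OB IA OA' IB OB' :=
  fun ia' oa ib' ob ia oa' _ ob' => (∑ j, W ia' oa ib' ob ia oa' j ob') / (Fintype.card IB : ℝ)

/-- Reduce-and-replace over the index `OB'`. -/
def rrOB' (W : WTen IA' OA IB' OB IA OA' IB OB') : WTen IA' OA IB' OB IA OA' IB OB' :=
  fun ia' oa ib' ob ia oa' ib _ => (∑ j, W ia' oa ib' ob ia oa' ib j) / (Fintype.card OB' : ℝ)

/-- Total reduction `r(W)`: the sum of all entries of `W`. -/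
def tot (W : WTen IA' OA IB' OB IA OA' IB OB') : ℝ :=
  ∑ ia', ∑ oa, ∑ ib', ∑ ob, ∑ ia, ∑ oa', ∑ ib, ∑ ob', W ia' oa ib' ob ia oa' ib ob'

/-- Elementwise nonnegativity `W ≥ 0`. -/
def Nonneg8 (W : WTen IA' OA IB' OB IA OA' IB OB') : Prop :=
  ∀ ia' oa ib' ob ia oa' ib ob', 0 ≤ W ia' oa ib' ob ia oa' ib ob'

/-- Reduce-and-replace over all of Alice's indices `𝔸 = I'_A I_A O_A O'_A`. -/
def rrA (W : WTen IA' OA IB' OB IA OA' IB OB') : WTen IA' OA IB' OB IA OA' IB OB' :=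
  rrIA' (rrIA (rrOA (rrOA' W)))

/-- Reduce-and-replace over all of Bob's indices `𝔹 = I'_B I_B O_B O'_B`. -/
def rrB (W : WTen IA' OA IB' OB IA OA' IB OB') : WTen IA' OA IB' OB IA OA' IB OB' :=
  rrIB' (rrIB (rrOB (rrOB' W)))

/-- The combination `_{(1 − O'_A + O_A O'_A − I_A O_A O'_A)}W`. -/
def LA (W : WTen IA' OA IB' OB IA OA' IB OB') : WTen IA' OA IB' OB IA OA' IB OB' :=
  W - rrOA' W + rrOA (rrOA' W) - rrIA (rrOA (rrOA' W))

/-- The combination `_{(1 − O'_B + O_B O'_B − I_B O_B O'_B)}W`. -/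
def LB (W : WTen IA' OA IB' OB IA OA' IB OB') : WTen IA' OA IB' OB IA OA' IB OB' :=
  W - rrOB' W + rrOB (rrOB' W) - rrIB (rrOB (rrOB' W))

/-- A bipartite process tensor. -/
def IsProcessTensor (W : WTen IA' OA IB' OB IA OA' IB OB') : Prop :=
  Nonneg8 W ∧
  tot W = (Fintype.card IA : ℝ) * (Fintype.card OA' : ℝ) *
      (Fintype.card IB : ℝ) * (Fintype.card OB' : ℝ) ∧
  rrA (LB W) = 0 ∧
  rrB (LA W) = 0 ∧
  LA (LB W) = 0

/-- Reduce-and-replace over all primed indices `O'_A O'_B I'_A I'_B`. -/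
def rrPrimes (W : WTen IA' OA IB' OB IA OA' IB OB') : WTen IA' OA IB' OB IA OA' IB OB' :=
  rrOA' (rrOB' (rrIA' (rrIB' W)))

/-- The combination `_{(1 − O'_A + O'_A I'_A − O'_B O'_A I'_A)}W`. -/
def MA (W : WTen IA' OA IB' OB IA OA' IB OB') : WTen IA' OA IB' OB IA OA' IB OB' :=
  W - rrOA' W + rrIA' (rrOA' W) - rrOB' (rrIA' (rrOA' W))

/-- The combination `_{(1 − O'_B + O'_B I'_B − O'_A O'_B I'_B)}W`. -/
def MB (W : WTen IA' OA IB' OB IA OA' IB OB') : WTen IA' OA IB' OB IA OA' IB OB' :=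
  W - rrOB' W + rrIB' (rrOB' W) - rrOA' (rrIB' (rrOB' W))

/-- The four nonsignaling-preservation (NSP) conditions. -/
def SatisfiesNSP (W : WTen IA' OA IB' OB IA OA' IB OB') : Prop :=
  rrOA (rrPrimes W) = rrIA (rrOA (rrPrimes W)) ∧
  rrOB (rrPrimes W) = rrIB (rrOB (rrPrimes W)) ∧
  rrOA (MA W) = rrIA (rrOA (MA W)) ∧
  rrOB (MB W) = rrIB (rrOB (MB W))

/-- A boxworld process. -/
def IsBoxworldProcess (W : WTen IA' OA IB' OB IA OA' IB OB') : Prop :=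
  Nonneg8 W ∧
  tot W = (Fintype.card IA : ℝ) * (Fintype.card OA' : ℝ) *
      (Fintype.card IB : ℝ) * (Fintype.card OB' : ℝ) ∧
  rrA W = rrOB' (rrA W) ∧
  rrB W = rrOA' (rrB W) ∧
  W = rrOA' W + rrOB' W - rrOA' (rrOB' W) ∧
  rrOA W = rrIA (rrOA W) ∧
  rrOB W = rrIB (rrOB W)

/-- The action `W * P` of a process tensor on a bipartite box
`P(o'_A, o'_B | i'_A, i'_B)`, contracting the indices `O'_A, O'_B, I'_A, I'_B`. -/
def actOnBox (W : WTen IA' OA IB' OB IA OA' IB OB')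
    (P : OA' → OB' → IA' → IB' → ℝ) : OA → OB → IA → IB → ℝ :=
  fun oa ob ia ib =>
    ∑ ia', ∑ ib', ∑ oa', ∑ ob', W ia' oa ib' ob ia oa' ib ob' * P oa' ob' ia' ib'

end WireDefs

section OpDefs

variable {I' O I O' : Type}
variable [Fintype I'] [Fintype O] [Fintype I] [Fintype O']

/-- Reduce-and-replace over the index `I'` of an operation tensor. -/
def rrOpI' (T : OpTen I' O I O') : OpTen I' O I O' :=
  fun _ o i o' => (∑ j, T j o i o') / (Fintype.card I' : ℝ)

/-- Reduce-and-replace over the index `O` of an operation tensor. -/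
def rrOpO (T : OpTen I' O I O') : OpTen I' O I O' :=
  fun i' _ i o' => (∑ j, T i' j i o') / (Fintype.card O : ℝ)

/-- Reduce-and-replace over the index `I` of an operation tensor. -/
def rrOpI (T : OpTen I' O I O') : OpTen I' O I O' :=
  fun i' o _ o' => (∑ j, T i' o j o') / (Fintype.card I : ℝ)

/-- Reduce-and-replace over the index `O'` of an operation tensor. -/
def rrOpO' (T : OpTen I' O I O') : OpTen I' O I O' :=
  fun i' o i _ => (∑ j, T i' o i j) / (Fintype.card O' : ℝ)

/-- Total reduction of an operation tensor. -/
def totOp (T : OpTen I' O I O') : ℝ := ∑ i', ∑ o, ∑ i, ∑ o', T i' o i o'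

/-- A deterministic local operation. -/
def IsDetOp (T : OpTen I' O I O') : Prop :=
  totOp T = (Fintype.card I' : ℝ) * (Fintype.card O : ℝ) ∧
  rrOpI (rrOpO' T) = rrOpI' (rrOpI (rrOpO (rrOpO' T))) ∧
  rrOpO' T = rrOpO (rrOpO' T)

/-- A set of probabilistic local operations `T^{a|x}(i, o' | i', o)`:
nonnegative tensors whose sum over the classical outcome `a` is, for each
classical input `x`, a deterministic local operation. -/
def IsLocalOps {A X : Type} [Fintype A] (T : A → X → OpTen I' O I O') : Prop :=
  (∀ a x i' o i o', 0 ≤ T a x i' o i o') ∧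
  ∀ x, IsDetOp (fun i' o i o' => ∑ a, T a x i' o i o')

/-- A nonsignaling set of probabilistic local operations: either the
deterministic operation `T^x` is independent of `x` (case 1), or it is a
convex combination of deterministic pre-processings `f_λ` (possibly depending
on `x`) and post-processings `g_λ` independent of both the box output and `x`
(case 2). -/
def IsNSLocalOps {A X : Type} [Fintype A] (T : A → X → OpTen I' O I O') : Prop :=
  IsLocalOps T ∧
  ((∀ x x' i' o i o', (∑ a, T a x i' o i o') = ∑ a, T a x' i' o i o') ∨
    ∃ (m : ℕ) (π : Fin m → ℝ) (f : Fin m → I' → X → I) (g : Fin m → I' → O'),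
      (∀ l, 0 ≤ π l) ∧ (∑ l, π l = 1) ∧
      ∀ x i' o i o', (∑ a, T a x i' o i o') =
        ∑ l, π l * ((if i = f l i' x then (1 : ℝ) else 0) *
          (if o' = g l i' then (1 : ℝ) else 0)))

end OpDefs

/-- A bipartite nonsignaling box `P(o_1, o_2 | i_1, i_2)`. -/
def IsNSBox {O1 O2 I1 I2 : Type} [Fintype O1] [Fintype O2]
    (P : O1 → O2 → I1 → I2 → ℝ) : Prop :=
  (∀ o1 o2 i1 i2, 0 ≤ P o1 o2 i1 i2) ∧
  (∀ i1 i2, ∑ o1, ∑ o2, P o1 o2 i1 i2 = 1) ∧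
  (∀ o1 i1 i2 i2', ∑ o2, P o1 o2 i1 i2 = ∑ o2, P o1 o2 i1 i2') ∧
  (∀ o2 i1 i1' i2, ∑ o1, P o1 o2 i1 i2 = ∑ o1, P o1 o2 i1' i2)

section Corr

variable {IA' OA IB' OB IA OA' IB OB' : Type}
variable [Fintype IA'] [Fintype OA] [Fintype IB'] [Fintype OB]
variable [Fintype IA] [Fintype OA'] [Fintype IB] [Fintype OB']
variable {A X B Y : Type}

/-- The correlations `(T^{A|X} ⊗ T^{B|Y}) * W` generated by local operations
acting on a process tensor: contraction over all eight wire indices. -/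
def corr (TA : A → X → OpTen IA' OA IA OA') (TB : B → Y → OpTen IB' OB IB OB')
    (W : WTen IA' OA IB' OB IA OA' IB OB') (a : A) (b : B) (x : X) (y : Y) : ℝ :=
  ∑ ia', ∑ oa, ∑ ib', ∑ ob, ∑ ia, ∑ oa', ∑ ib, ∑ ob',
    TA a x ia' oa ia oa' * TB b y ib' ob ib ob' * W ia' oa ib' ob ia oa' ib ob'

end Corr


set_option linter.unusedSectionVars false

section AuxOp
variable {I' O I O' : Type}
variable [Fintype I'] [Fintype O] [Fintype I] [Fintype O']

lemma card_ne_zero' (α : Type) [Fintype α] [Nonempty α] : (Fintype.card α : ℝ) ≠ 0 := by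
  exact_mod_cast Fintype.card_ne_zero

def constOp (I' O I O' : Type) (c : ℝ) : OpTen I' O I O' := fun _ _ _ _ => c

def LOp (T : OpTen I' O I O') : OpTen I' O I O' :=
  T - rrOpO' T + rrOpO (rrOpO' T) - rrOpI (rrOpO (rrOpO' T))

-- rr of constants
lemma rrOpO'_const [Nonempty O'] (c : ℝ) :
    rrOpO' (constOp I' O I O' c) = constOp I' O I O' c := by
  funext i' o i o'
  simp [rrOpO', constOp, Finset.sum_const, Finset.card_univ, nsmul_eq_mul,
    mul_div_cancel_left₀ _ (card_ne_zero' O')]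

lemma rrOpO_const [Nonempty O] (c : ℝ) :
    rrOpO (constOp I' O I O' c) = constOp I' O I O' c := by
  funext i' o i o'
  simp [rrOpO, constOp, Finset.sum_const, Finset.card_univ, nsmul_eq_mul,
    mul_div_cancel_left₀ _ (card_ne_zero' O)]

lemma rrOpI_const [Nonempty I] (c : ℝ) :
    rrOpI (constOp I' O I O' c) = constOp I' O I O' c := by
  funext i' o i o'
  simp [rrOpI, constOp, Finset.sum_const, Finset.card_univ, nsmul_eq_mul,
    mul_div_cancel_left₀ _ (card_ne_zero' I)]

lemma rrOpI'_const [Nonempty I'] (c : ℝ) :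
    rrOpI' (constOp I' O I O' c) = constOp I' O I O' c := by
  funext i' o i o'
  simp [rrOpI', constOp, Finset.sum_const, Finset.card_univ, nsmul_eq_mul,
    mul_div_cancel_left₀ _ (card_ne_zero' I')]

-- linearity
lemma rrOpO'_add (T S : OpTen I' O I O') : rrOpO' (T + S) = rrOpO' T + rrOpO' S := by
  funext i' o i o'
  simp [rrOpO', Finset.sum_add_distrib, add_div]

lemma rrOpO_add (T S : OpTen I' O I O') : rrOpO (T + S) = rrOpO T + rrOpO S := by
  funext i' o i o'
  simp [rrOpO, Finset.sum_add_distrib, add_div]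

lemma rrOpI_add (T S : OpTen I' O I O') : rrOpI (T + S) = rrOpI T + rrOpI S := by
  funext i' o i o'
  simp [rrOpI, Finset.sum_add_distrib, add_div]

lemma rrOpI'_add (T S : OpTen I' O I O') : rrOpI' (T + S) = rrOpI' T + rrOpI' S := by
  funext i' o i o'
  simp [rrOpI', Finset.sum_add_distrib, add_div]

lemma rrOpO'_sub (T S : OpTen I' O I O') : rrOpO' (T - S) = rrOpO' T - rrOpO' S := by
  funext i' o i o'
  simp [rrOpO', Finset.sum_sub_distrib, sub_div]

lemma rrOpO_sub (T S : OpTen I' O I O') : rrOpO (T - S) = rrOpO T - rrOpO S := by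
  funext i' o i o'
  simp [rrOpO, Finset.sum_sub_distrib, sub_div]

lemma rrOpI_sub (T S : OpTen I' O I O') : rrOpI (T - S) = rrOpI T - rrOpI S := by
  funext i' o i o'
  simp [rrOpI, Finset.sum_sub_distrib, sub_div]

lemma rrOpI'_sub (T S : OpTen I' O I O') : rrOpI' (T - S) = rrOpI' T - rrOpI' S := by
  funext i' o i o'
  simp [rrOpI', Finset.sum_sub_distrib, sub_div]

lemma rrOpO'_smul (c : ℝ) (T : OpTen I' O I O') : rrOpO' (c • T) = c • rrOpO' T := by
  funext i' o i o'
  simp [rrOpO', ← Finset.mul_sum, mul_div_assoc]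

lemma rrOpO_smul (c : ℝ) (T : OpTen I' O I O') : rrOpO (c • T) = c • rrOpO T := by
  funext i' o i o'
  simp [rrOpO, ← Finset.mul_sum, mul_div_assoc]

lemma rrOpI_smul (c : ℝ) (T : OpTen I' O I O') : rrOpI (c • T) = c • rrOpI T := by
  funext i' o i o'
  simp [rrOpI, ← Finset.mul_sum, mul_div_assoc]

lemma rrOpI'_smul (c : ℝ) (T : OpTen I' O I O') : rrOpI' (c • T) = c • rrOpI' T := by
  funext i' o i o'
  simp [rrOpI', ← Finset.mul_sum, mul_div_assoc]

-- independence
lemma rrOpO'_of_indep [Nonempty O'] (X : OpTen I' O I O')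
    (h : ∀ i' o i o'1 o'2, X i' o i o'1 = X i' o i o'2) : rrOpO' X = X := by
  funext i' o i o'
  have : ∀ j, X i' o i j = X i' o i o' := fun j => h _ _ _ _ _
  simp [rrOpO', this, Finset.sum_const, Finset.card_univ, nsmul_eq_mul,
    mul_div_cancel_left₀ _ (card_ne_zero' O')]

lemma rrOpO_of_indep [Nonempty O] (X : OpTen I' O I O')
    (h : ∀ i' o1 o2 i0 o', X i' o1 i0 o' = X i' o2 i0 o') : rrOpO X = X := by
  funext i' o i o'
  have : ∀ j, X i' j i o' = X i' o i o' := fun j => h _ _ _ _ _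
  simp [rrOpO, this, Finset.sum_const, Finset.card_univ, nsmul_eq_mul,
    mul_div_cancel_left₀ _ (card_ne_zero' O)]

lemma rrOpI_of_indep [Nonempty I] (X : OpTen I' O I O')
    (h : ∀ i' o i1 i2 o', X i' o i1 o' = X i' o i2 o') : rrOpI X = X := by
  funext i' o i o'
  have : ∀ j, X i' o j o' = X i' o i o' := fun j => h _ _ _ _ _
  simp [rrOpI, this, Finset.sum_const, Finset.card_univ, nsmul_eq_mul,
    mul_div_cancel_left₀ _ (card_ne_zero' I)]

-- totals
lemma totOp_add (T S : OpTen I' O I O') : totOp (T + S) = totOp T + totOp S := by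
  simp [totOp, Finset.sum_add_distrib]

lemma totOp_sub (T S : OpTen I' O I O') : totOp (T - S) = totOp T - totOp S := by
  simp [totOp, Finset.sum_sub_distrib]

lemma totOp_smul (c : ℝ) (T : OpTen I' O I O') : totOp (c • T) = c * totOp T := by
  simp [totOp, Finset.mul_sum]

lemma totOp_const (c : ℝ) : totOp (constOp I' O I O' c) =
    (Fintype.card I' : ℝ) * (Fintype.card O : ℝ) * (Fintype.card I : ℝ) *
      (Fintype.card O' : ℝ) * c := by
  simp [totOp, constOp, Finset.sum_const, Finset.card_univ, nsmul_eq_mul]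
  ring

lemma totOp_rrOpO' [Nonempty O'] (T : OpTen I' O I O') : totOp (rrOpO' T) = totOp T := by
  unfold totOp rrOpO'
  refine Finset.sum_congr rfl fun i' _ => Finset.sum_congr rfl fun o _ =>
    Finset.sum_congr rfl fun i _ => ?_
  rw [Finset.sum_const, Finset.card_univ, nsmul_eq_mul,
    mul_div_cancel₀ _ (card_ne_zero' O')]

lemma totOp_rrOpI [Nonempty I] (T : OpTen I' O I O') : totOp (rrOpI T) = totOp T := by
  unfold totOp rrOpI
  refine Finset.sum_congr rfl fun i' _ => Finset.sum_congr rfl fun o _ => ?_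
  rw [Finset.sum_comm]
  conv_rhs => rw [Finset.sum_comm]
  refine Finset.sum_congr rfl fun o' _ => ?_
  rw [Finset.sum_const, Finset.card_univ, nsmul_eq_mul,
    mul_div_cancel₀ _ (card_ne_zero' I)]

lemma totOp_rrOpO [Nonempty O] (T : OpTen I' O I O') : totOp (rrOpO T) = totOp T := by
  unfold totOp rrOpO
  refine Finset.sum_congr rfl fun i' _ => ?_
  rw [Finset.sum_comm]
  conv_rhs => rw [Finset.sum_comm]
  refine Finset.sum_congr rfl fun i _ => ?_
  rw [Finset.sum_comm]
  conv_rhs => rw [Finset.sum_comm]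
  refine Finset.sum_congr rfl fun o' _ => ?_
  rw [Finset.sum_const, Finset.card_univ, nsmul_eq_mul,
    mul_div_cancel₀ _ (card_ne_zero' O)]

lemma totOp_rrOpI' [Nonempty I'] (T : OpTen I' O I O') : totOp (rrOpI' T) = totOp T := by
  unfold totOp rrOpI'
  rw [Finset.sum_comm]
  conv_rhs => rw [Finset.sum_comm]
  refine Finset.sum_congr rfl fun o _ => ?_
  rw [Finset.sum_comm]
  conv_rhs => rw [Finset.sum_comm]
  refine Finset.sum_congr rfl fun i _ => ?_
  rw [Finset.sum_comm]
  conv_rhs => rw [Finset.sum_comm]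
  refine Finset.sum_congr rfl fun o' _ => ?_
  rw [Finset.sum_const, Finset.card_univ, nsmul_eq_mul,
    mul_div_cancel₀ _ (card_ne_zero' I')]

-- full average
lemma rrOp_fullavg [Nonempty I'] [Nonempty O] [Nonempty I] [Nonempty O']
    (T : OpTen I' O I O') :
    rrOpI' (rrOpI (rrOpO (rrOpO' T))) = constOp I' O I O'
      (totOp T / ((Fintype.card I' : ℝ) * (Fintype.card O : ℝ) * (Fintype.card I : ℝ) *
        (Fintype.card O' : ℝ))) := by
  funext a b c d
  show (∑ i', (∑ i, (∑ o, (∑ o', T i' o i o') / _) / _) / _) / _ = _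
  simp only [← Finset.sum_div, div_div, constOp, totOp]
  rw [show ((Fintype.card O' : ℝ) * (Fintype.card O : ℝ) * (Fintype.card I : ℝ) *
      (Fintype.card I' : ℝ)) = ((Fintype.card I' : ℝ) * (Fintype.card O : ℝ) *
      (Fintype.card I : ℝ) * (Fintype.card O' : ℝ)) by ring]
  congr 1
  refine Finset.sum_congr rfl fun i' _ => ?_
  rw [Finset.sum_comm]


variable [Nonempty I'] [Nonempty O] [Nonempty I] [Nonempty O']

lemma constOp_zero : constOp I' O I O' 0 = 0 := rfl

lemma rrOpI'_zero : rrOpI' (0 : OpTen I' O I O') = 0 := by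
  funext i' o i o'; simp [rrOpI']

lemma cardsFrac :
    ((Fintype.card I' : ℝ) * (Fintype.card O : ℝ)) /
      ((Fintype.card I' : ℝ) * (Fintype.card O : ℝ) * (Fintype.card I : ℝ) *
        (Fintype.card O' : ℝ)) =
    1 / ((Fintype.card I : ℝ) * (Fintype.card O' : ℝ)) := by
  rw [show ((Fintype.card I' : ℝ) * (Fintype.card O : ℝ) * (Fintype.card I : ℝ) *
      (Fintype.card O' : ℝ)) = ((Fintype.card I' : ℝ) * (Fintype.card O : ℝ)) *
      ((Fintype.card I : ℝ) * (Fintype.card O' : ℝ)) by ring,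
    div_mul_cancel_left₀ (mul_ne_zero (card_ne_zero' I') (card_ne_zero' O)), one_div]

lemma rr3_eq_const {T : OpTen I' O I O'} (hT : IsDetOp T) :
    rrOpI (rrOpO' T) = constOp I' O I O' (1 / ((Fintype.card I : ℝ) * (Fintype.card O' : ℝ))) := by
  rw [hT.2.1, rrOp_fullavg, hT.1]
  exact congrArg (constOp I' O I O') cardsFrac

/-- The centered version of a deterministic operation. -/
lemma good_of_det {T : OpTen I' O I O'} (hT : IsDetOp T) :
    totOp (T - constOp I' O I O' (1 / ((Fintype.card I : ℝ) * (Fintype.card O' : ℝ)))) = 0 ∧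
    rrOpO' (T - constOp I' O I O' (1 / ((Fintype.card I : ℝ) * (Fintype.card O' : ℝ)))) =
      rrOpO (rrOpO' (T - constOp I' O I O' (1 / ((Fintype.card I : ℝ) * (Fintype.card O' : ℝ))))) ∧
    rrOpI (rrOpO' (T - constOp I' O I O' (1 / ((Fintype.card I : ℝ) * (Fintype.card O' : ℝ))))) = 0 := by
  refine ⟨?_, ?_, ?_⟩
  · rw [totOp_sub, totOp_const, hT.1, mul_one_div, sub_eq_zero,
      eq_div_iff (mul_ne_zero (card_ne_zero' I) (card_ne_zero' O'))]
    ring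
  · rw [rrOpO'_sub, rrOpO'_const, rrOpO_sub, rrOpO_const, ← hT.2.2]
  · rw [rrOpO'_sub, rrOpO'_const, rrOpI_sub, rrOpI_const, rr3_eq_const hT, sub_self]

lemma LOp_fix {M : OpTen I' O I O'}
    (g2 : rrOpO' M = rrOpO (rrOpO' M)) (g3 : rrOpI (rrOpO' M) = 0) : LOp M = M := by
  unfold LOp
  rw [← g2, g3]
  abel

lemma good_LOp (R : OpTen I' O I O') :
    totOp (LOp R) = 0 ∧
    rrOpO' (LOp R) = rrOpO (rrOpO' (LOp R)) ∧
    rrOpI (rrOpO' (LOp R)) = 0 := by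
  have i1 : rrOpO' (rrOpO' R) = rrOpO' R :=
    rrOpO'_of_indep _ (fun _ _ _ _ _ => rfl)
  have i2 : rrOpO' (rrOpO (rrOpO' R)) = rrOpO (rrOpO' R) :=
    rrOpO'_of_indep _ (fun _ _ _ _ _ => rfl)
  have i3 : rrOpO' (rrOpI (rrOpO (rrOpO' R))) = rrOpI (rrOpO (rrOpO' R)) :=
    rrOpO'_of_indep _ (fun _ _ _ _ _ => rfl)
  have i4 : rrOpO (rrOpO (rrOpO' R)) = rrOpO (rrOpO' R) :=
    rrOpO_of_indep _ (fun _ _ _ _ _ => rfl)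
  have i5 : rrOpO (rrOpI (rrOpO (rrOpO' R))) = rrOpI (rrOpO (rrOpO' R)) :=
    rrOpO_of_indep _ (fun _ _ _ _ _ => rfl)
  have i6 : rrOpI (rrOpI (rrOpO (rrOpO' R))) = rrOpI (rrOpO (rrOpO' R)) :=
    rrOpI_of_indep _ (fun _ _ _ _ _ => rfl)
  have e1 : rrOpO' (LOp R) = rrOpO (rrOpO' R) - rrOpI (rrOpO (rrOpO' R)) := by
    unfold LOp
    rw [rrOpO'_sub, rrOpO'_add, rrOpO'_sub, i1, i2, i3]
    abel
  refine ⟨?_, ?_, ?_⟩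
  · unfold LOp
    rw [totOp_sub, totOp_add, totOp_sub, totOp_rrOpO', totOp_rrOpO, totOp_rrOpO',
      totOp_rrOpI, totOp_rrOpO, totOp_rrOpO']
    ring
  · conv_lhs => rw [e1]
    rw [e1, rrOpO_sub, i4, i5]
  · rw [e1, rrOpI_sub, i6, sub_self]

lemma det_of_good {M : OpTen I' O I O'}
    (g1 : totOp M = 0) (g2 : rrOpO' M = rrOpO (rrOpO' M)) (g3 : rrOpI (rrOpO' M) = 0)
    (e : ℝ) :
    IsDetOp (constOp I' O I O' (1 / ((Fintype.card I : ℝ) * (Fintype.card O' : ℝ))) + e • M) := by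
  set c := (1 : ℝ) / ((Fintype.card I : ℝ) * (Fintype.card O' : ℝ)) with hc
  refine ⟨?_, ?_, ?_⟩
  · rw [totOp_add, totOp_const, totOp_smul, g1, hc, mul_one_div, mul_zero, add_zero,
      div_eq_iff (mul_ne_zero (card_ne_zero' I) (card_ne_zero' O'))]
    ring
  · have lhs : rrOpI (rrOpO' (constOp I' O I O' c + e • M)) = constOp I' O I O' c := by
      rw [rrOpO'_add, rrOpO'_const, rrOpO'_smul, rrOpI_add, rrOpI_const, rrOpI_smul, g3]
      simp
    have rhs : rrOpI' (rrOpI (rrOpO (rrOpO' (constOp I' O I O' c + e • M)))) =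
        constOp I' O I O' c := by
      rw [rrOpO'_add, rrOpO'_const, rrOpO'_smul, rrOpO_add, rrOpO_const, rrOpO_smul,
        rrOpI_add, rrOpI_const, rrOpI_smul, ← g2, g3, rrOpI'_add, rrOpI'_const, rrOpI'_smul,
        rrOpI'_zero]
      simp
    rw [lhs, rhs]
  · rw [rrOpO'_add, rrOpO'_const, rrOpO'_smul, rrOpO_add, rrOpO_const, rrOpO_smul, ← g2]

lemma det_const :
    IsDetOp (constOp I' O I O' (1 / ((Fintype.card I : ℝ) * (Fintype.card O' : ℝ)))) := by
  have h := det_of_good (M := (0 : OpTen I' O I O')) (by simp [totOp])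
    (by rw [← constOp_zero, rrOpO'_const, rrOpO_const]) (by rw [← constOp_zero, rrOpO'_const, rrOpI_const]) 0
  simpa using h

def deltaIn (x1 : I) (x2 : O') : OpTen I' O I O' :=
  fun _ _ i o' => (if i = x1 then (1 : ℝ) else 0) * (if o' = x2 then (1 : ℝ) else 0)

lemma det_deltaIn (x1 : I) (x2 : O') : IsDetOp (deltaIn x1 x2 : OpTen I' O I O') := by
  refine ⟨?_, ?_, ?_⟩
  · simp [totOp, deltaIn, Finset.sum_ite_eq', Finset.sum_const, Finset.card_univ]
  · have l : rrOpI (rrOpO' (deltaIn x1 x2 : OpTen I' O I O')) =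
        constOp I' O I O' (1 / ((Fintype.card I : ℝ) * (Fintype.card O' : ℝ))) := by
      funext i' o i o'
      simp [rrOpI, rrOpO', deltaIn, constOp, Finset.sum_ite_eq', ← Finset.sum_div, div_div]
      ring
    have r : rrOpI' (rrOpI (rrOpO (rrOpO' (deltaIn x1 x2 : OpTen I' O I O')))) =
        constOp I' O I O' (1 / ((Fintype.card I : ℝ) * (Fintype.card O' : ℝ))) := by
      have htt : totOp (deltaIn x1 x2 : OpTen I' O I O') =
          (Fintype.card I' : ℝ) * (Fintype.card O : ℝ) := by
        simp [totOp, deltaIn, Finset.sum_ite_eq', Finset.sum_const, Finset.card_univ]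
      rw [rrOp_fullavg, htt]
      exact congrArg (constOp I' O I O') cardsFrac
    rw [l, r]
  · funext i' o i o'
    simp [rrOpO, rrOpO', deltaIn, Finset.sum_ite_eq', ← Finset.sum_div,
      Finset.sum_const, Finset.card_univ, mul_div_assoc]


end AuxOp

section Aux8

lemma adj_master {P J : Type} [Fintype P] [Fintype J] (Z W : P → ℝ) (d : ℝ)
    (s : P → J → P) (g : P → J)
    (hss : ∀ p j i, s (s p j) i = s p i) (hgs : ∀ p j, g (s p j) = j)
    (hsg : ∀ p, s p (g p) = p) :
    ∑ p, ((∑ j, Z (s p j)) / d) * W p = ∑ p, Z p * ((∑ j, W (s p j)) / d) := by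
  have hinv : Function.Involutive (fun x : P × J => (s x.1 x.2, g x.1)) := by
    intro x
    simp only [hss, hgs, hsg]
  have key : ∑ x : P × J, Z (s x.1 x.2) * W x.1 = ∑ x : P × J, Z x.1 * W (s x.1 x.2) := by
    refine Fintype.sum_equiv hinv.toPerm _ _ ?_
    intro x
    simp only [Function.Involutive.coe_toPerm, hss, hsg, hgs]
  have l1 : ∀ p : P, ((∑ j, Z (s p j)) / d) * W p = (∑ j, Z (s p j) * W p) / d := by
    intro p; rw [div_mul_eq_mul_div, Finset.sum_mul]
  have l2 : ∀ p : P, Z p * ((∑ j, W (s p j)) / d) = (∑ j, Z p * W (s p j)) / d := by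
    intro p; rw [← mul_div_assoc, Finset.mul_sum]
  simp only [l1, l2, ← Finset.sum_div]
  congr 1
  rw [← Fintype.sum_prod_type', ← Fintype.sum_prod_type']
  exact key

variable {IA' OA IB' OB IA OA' IB OB' : Type}
variable [Fintype IA'] [Fintype OA] [Fintype IB'] [Fintype OB]
variable [Fintype IA] [Fintype OA'] [Fintype IB] [Fintype OB']
variable [Nonempty IA'] [Nonempty OA] [Nonempty IB'] [Nonempty OB]
variable [Nonempty IA] [Nonempty OA'] [Nonempty IB] [Nonempty OB']

/-- Curried 8-tensor as a function on the product type. -/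
def toP (W : WTen IA' OA IB' OB IA OA' IB OB') :
    IA' × OA × IB' × OB × IA × OA' × IB × OB' → ℝ :=
  fun p => W p.1 p.2.1 p.2.2.1 p.2.2.2.1 p.2.2.2.2.1 p.2.2.2.2.2.1 p.2.2.2.2.2.2.1
    p.2.2.2.2.2.2.2

/-- Full pairing (contraction over all eight indices) of two 8-tensors. -/
def pairP (Z W : WTen IA' OA IB' OB IA OA' IB OB') : ℝ :=
  ∑ p, toP Z p * toP W p

lemma nested8 (F : WTen IA' OA IB' OB IA OA' IB OB') :
    (∑ ia', ∑ oa, ∑ ib', ∑ ob, ∑ ia, ∑ oa', ∑ ib, ∑ ob',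
      F ia' oa ib' ob ia oa' ib ob') = ∑ p, toP F p := by
  simp [toP, Fintype.sum_prod_type]

lemma tot_eq_pairP_aux (W : WTen IA' OA IB' OB IA OA' IB OB') :
    tot W = ∑ p, toP W p := nested8 W

-- adjointness of the eight reduce-and-replace maps
lemma pairP_rrIA' (Z W : WTen IA' OA IB' OB IA OA' IB OB') :
    pairP (rrIA' Z) W = pairP Z (rrIA' W) :=
  adj_master (toP Z) (toP W) (Fintype.card IA' : ℝ)
    (fun p j => (j, p.2)) (fun p => p.1)
    (fun _ _ _ => rfl) (fun _ _ => rfl) (fun _ => rfl)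

lemma pairP_rrOA (Z W : WTen IA' OA IB' OB IA OA' IB OB') :
    pairP (rrOA Z) W = pairP Z (rrOA W) :=
  adj_master (toP Z) (toP W) (Fintype.card OA : ℝ)
    (fun p j => (p.1, j, p.2.2)) (fun p => p.2.1)
    (fun _ _ _ => rfl) (fun _ _ => rfl) (fun _ => rfl)

lemma pairP_rrIB' (Z W : WTen IA' OA IB' OB IA OA' IB OB') :
    pairP (rrIB' Z) W = pairP Z (rrIB' W) :=
  adj_master (toP Z) (toP W) (Fintype.card IB' : ℝ)
    (fun p j => (p.1, p.2.1, j, p.2.2.2)) (fun p => p.2.2.1)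
    (fun _ _ _ => rfl) (fun _ _ => rfl) (fun _ => rfl)

lemma pairP_rrOB (Z W : WTen IA' OA IB' OB IA OA' IB OB') :
    pairP (rrOB Z) W = pairP Z (rrOB W) :=
  adj_master (toP Z) (toP W) (Fintype.card OB : ℝ)
    (fun p j => (p.1, p.2.1, p.2.2.1, j, p.2.2.2.2)) (fun p => p.2.2.2.1)
    (fun _ _ _ => rfl) (fun _ _ => rfl) (fun _ => rfl)

lemma pairP_rrIA (Z W : WTen IA' OA IB' OB IA OA' IB OB') :
    pairP (rrIA Z) W = pairP Z (rrIA W) :=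
  adj_master (toP Z) (toP W) (Fintype.card IA : ℝ)
    (fun p j => (p.1, p.2.1, p.2.2.1, p.2.2.2.1, j, p.2.2.2.2.2)) (fun p => p.2.2.2.2.1)
    (fun _ _ _ => rfl) (fun _ _ => rfl) (fun _ => rfl)

lemma pairP_rrOA' (Z W : WTen IA' OA IB' OB IA OA' IB OB') :
    pairP (rrOA' Z) W = pairP Z (rrOA' W) :=
  adj_master (toP Z) (toP W) (Fintype.card OA' : ℝ)
    (fun p j => (p.1, p.2.1, p.2.2.1, p.2.2.2.1, p.2.2.2.2.1, j, p.2.2.2.2.2.2))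
    (fun p => p.2.2.2.2.2.1)
    (fun _ _ _ => rfl) (fun _ _ => rfl) (fun _ => rfl)

lemma pairP_rrIB (Z W : WTen IA' OA IB' OB IA OA' IB OB') :
    pairP (rrIB Z) W = pairP Z (rrIB W) :=
  adj_master (toP Z) (toP W) (Fintype.card IB : ℝ)
    (fun p j => (p.1, p.2.1, p.2.2.1, p.2.2.2.1, p.2.2.2.2.1, p.2.2.2.2.2.1, j,
      p.2.2.2.2.2.2.2))
    (fun p => p.2.2.2.2.2.2.1)
    (fun _ _ _ => rfl) (fun _ _ => rfl) (fun _ => rfl)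

lemma pairP_rrOB' (Z W : WTen IA' OA IB' OB IA OA' IB OB') :
    pairP (rrOB' Z) W = pairP Z (rrOB' W) :=
  adj_master (toP Z) (toP W) (Fintype.card OB' : ℝ)
    (fun p j => (p.1, p.2.1, p.2.2.1, p.2.2.2.1, p.2.2.2.2.1, p.2.2.2.2.2.1,
      p.2.2.2.2.2.2.1, j))
    (fun p => p.2.2.2.2.2.2.2)
    (fun _ _ _ => rfl) (fun _ _ => rfl) (fun _ => rfl)

end Aux8

section Aux9

variable {IA' OA IB' OB IA OA' IB OB' : Type}
variable [Fintype IA'] [Fintype OA] [Fintype IB'] [Fintype OB]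
variable [Fintype IA] [Fintype OA'] [Fintype IB] [Fintype OB']
variable [Nonempty IA'] [Nonempty OA] [Nonempty IB'] [Nonempty OB]
variable [Nonempty IA] [Nonempty OA'] [Nonempty IB] [Nonempty OB']

lemma addW8 (X Y : WTen IA' OA IB' OB IA OA' IB OB') (a b c d e f g h) :
    (X + Y) a b c d e f g h = X a b c d e f g h + Y a b c d e f g h := rfl

lemma subW8 (X Y : WTen IA' OA IB' OB IA OA' IB OB') (a b c d e f g h) :
    (X - Y) a b c d e f g h = X a b c d e f g h - Y a b c d e f g h := rfl

lemma mulW8 (X Y : WTen IA' OA IB' OB IA OA' IB OB') (a b c d e f g h) :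
    (X * Y) a b c d e f g h = X a b c d e f g h * Y a b c d e f g h := rfl

lemma smulW8 (r : ℝ) (X : WTen IA' OA IB' OB IA OA' IB OB') (a b c d e f g h) :
    (r • X) a b c d e f g h = r * X a b c d e f g h := rfl

lemma zeroW8 (a : IA') (b : OA) (c : IB') (d : OB) (e : IA) (f : OA') (g : IB) (h : OB') :
    (0 : WTen IA' OA IB' OB IA OA' IB OB') a b c d e f g h = 0 := rfl

lemma addOp4 {I' O I O' : Type} (X Y : OpTen I' O I O') (a b c d) :
    (X + Y) a b c d = X a b c d + Y a b c d := rfl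

lemma subOp4 {I' O I O' : Type} (X Y : OpTen I' O I O') (a b c d) :
    (X - Y) a b c d = X a b c d - Y a b c d := rfl

lemma smulOp4 {I' O I O' : Type} (r : ℝ) (X : OpTen I' O I O') (a b c d) :
    (r • X) a b c d = r * X a b c d := rfl

lemma pairP_add_left (X Y W : WTen IA' OA IB' OB IA OA' IB OB') :
    pairP (X + Y) W = pairP X W + pairP Y W := by
  simp [pairP, toP, addW8, Finset.sum_add_distrib, add_mul]

lemma pairP_sub_left (X Y W : WTen IA' OA IB' OB IA OA' IB OB') :
    pairP (X - Y) W = pairP X W - pairP Y W := by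
  simp [pairP, toP, subW8, Finset.sum_sub_distrib, sub_mul]

lemma pairP_smul_left (c : ℝ) (X W : WTen IA' OA IB' OB IA OA' IB OB') :
    pairP (c • X) W = c * pairP X W := by
  simp [pairP, toP, smulW8, Finset.mul_sum, mul_assoc]

lemma pairP_add_right (X Y W : WTen IA' OA IB' OB IA OA' IB OB') :
    pairP W (X + Y) = pairP W X + pairP W Y := by
  simp [pairP, toP, addW8, Finset.sum_add_distrib, mul_add]

lemma pairP_sub_right (X Y W : WTen IA' OA IB' OB IA OA' IB OB') :
    pairP W (X - Y) = pairP W X - pairP W Y := by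
  simp [pairP, toP, subW8, Finset.sum_sub_distrib, mul_sub]

lemma pairP_zero_right (Z : WTen IA' OA IB' OB IA OA' IB OB') :
    pairP Z (0 : WTen IA' OA IB' OB IA OA' IB OB') = 0 := by
  simp [pairP, toP, zeroW8]

-- commutation of reduce-and-replace on distinct indices (Alice side)
lemma commA1 (W : WTen IA' OA IB' OB IA OA' IB OB') :
    rrOA' (rrOA W) = rrOA (rrOA' W) := by
  funext a b c d e f g h
  simp only [rrOA, rrOA', ← Finset.sum_div, div_div]
  rw [Finset.sum_comm, mul_comm]

lemma commA2 (W : WTen IA' OA IB' OB IA OA' IB OB') :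
    rrOA' (rrIA W) = rrIA (rrOA' W) := by
  funext a b c d e f g h
  simp only [rrIA, rrOA', ← Finset.sum_div, div_div]
  rw [Finset.sum_comm, mul_comm]

lemma commA3 (W : WTen IA' OA IB' OB IA OA' IB OB') :
    rrOA (rrIA W) = rrIA (rrOA W) := by
  funext a b c d e f g h
  simp only [rrIA, rrOA, ← Finset.sum_div, div_div]
  rw [Finset.sum_comm, mul_comm]

lemma commB1 (W : WTen IA' OA IB' OB IA OA' IB OB') :
    rrOB' (rrOB W) = rrOB (rrOB' W) := by
  funext a b c d e f g h
  simp only [rrOB, rrOB', ← Finset.sum_div, div_div]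
  rw [Finset.sum_comm, mul_comm]

lemma commB2 (W : WTen IA' OA IB' OB IA OA' IB OB') :
    rrOB' (rrIB W) = rrIB (rrOB' W) := by
  funext a b c d e f g h
  simp only [rrIB, rrOB', ← Finset.sum_div, div_div]
  rw [Finset.sum_comm, mul_comm]

lemma commB3 (W : WTen IA' OA IB' OB IA OA' IB OB') :
    rrOB (rrIB W) = rrIB (rrOB W) := by
  funext a b c d e f g h
  simp only [rrIB, rrOB, ← Finset.sum_div, div_div]
  rw [Finset.sum_comm, mul_comm]

lemma pairP_LA (Z W : WTen IA' OA IB' OB IA OA' IB OB') :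
    pairP (LA Z) W = pairP Z (LA W) := by
  have h2 : pairP (rrOA (rrOA' Z)) W = pairP Z (rrOA (rrOA' W)) := by
    rw [pairP_rrOA, pairP_rrOA', commA1]
  have h3 : pairP (rrIA (rrOA (rrOA' Z))) W = pairP Z (rrIA (rrOA (rrOA' W))) := by
    rw [pairP_rrIA, pairP_rrOA, pairP_rrOA', commA3, commA2, commA1]
  unfold LA
  rw [pairP_sub_left, pairP_add_left, pairP_sub_left,
    pairP_sub_right, pairP_add_right, pairP_sub_right,
    pairP_rrOA', h2, h3]

lemma pairP_LB (Z W : WTen IA' OA IB' OB IA OA' IB OB') :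
    pairP (LB Z) W = pairP Z (LB W) := by
  have h2 : pairP (rrOB (rrOB' Z)) W = pairP Z (rrOB (rrOB' W)) := by
    rw [pairP_rrOB, pairP_rrOB', commB1]
  have h3 : pairP (rrIB (rrOB (rrOB' Z))) W = pairP Z (rrIB (rrOB (rrOB' W))) := by
    rw [pairP_rrIB, pairP_rrOB, pairP_rrOB', commB3, commB2, commB1]
  unfold LB
  rw [pairP_sub_left, pairP_add_left, pairP_sub_left,
    pairP_sub_right, pairP_add_right, pairP_sub_right,
    pairP_rrOB', h2, h3]

/-- Lift of an Alice operation tensor to the eight wires. -/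
def liftA (T : OpTen IA' OA IA OA') : WTen IA' OA IB' OB IA OA' IB OB' :=
  fun ia' oa _ _ ia oa' _ _ => T ia' oa ia oa'

/-- Lift of a Bob operation tensor to the eight wires. -/
def liftB (S : OpTen IB' OB IB OB') : WTen IA' OA IB' OB IA OA' IB OB' :=
  fun _ _ ib' ob _ _ ib ob' => S ib' ob ib ob'

lemma rrIA'_mul (T : OpTen IA' OA IA OA') (S : OpTen IB' OB IB OB') :
    rrIA' (liftA T * liftB S) = (liftA (rrOpI' T) * liftB S :
      WTen IA' OA IB' OB IA OA' IB OB') := by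
  funext a b c d e f g h
  simp [rrIA', liftA, liftB, rrOpI', mulW8, Finset.sum_mul, div_mul_eq_mul_div]

lemma rrOA_mul (T : OpTen IA' OA IA OA') (S : OpTen IB' OB IB OB') :
    rrOA (liftA T * liftB S) = (liftA (rrOpO T) * liftB S :
      WTen IA' OA IB' OB IA OA' IB OB') := by
  funext a b c d e f g h
  simp [rrOA, liftA, liftB, rrOpO, mulW8, Finset.sum_mul, div_mul_eq_mul_div]

lemma rrIA_mul (T : OpTen IA' OA IA OA') (S : OpTen IB' OB IB OB') :
    rrIA (liftA T * liftB S) = (liftA (rrOpI T) * liftB S :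
      WTen IA' OA IB' OB IA OA' IB OB') := by
  funext a b c d e f g h
  simp [rrIA, liftA, liftB, rrOpI, mulW8, Finset.sum_mul, div_mul_eq_mul_div]

lemma rrOA'_mul (T : OpTen IA' OA IA OA') (S : OpTen IB' OB IB OB') :
    rrOA' (liftA T * liftB S) = (liftA (rrOpO' T) * liftB S :
      WTen IA' OA IB' OB IA OA' IB OB') := by
  funext a b c d e f g h
  simp [rrOA', liftA, liftB, rrOpO', mulW8, Finset.sum_mul, div_mul_eq_mul_div]

lemma rrIB'_mul (T : OpTen IA' OA IA OA') (S : OpTen IB' OB IB OB') :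
    rrIB' (liftA T * liftB S) = (liftA T * liftB (rrOpI' S) :
      WTen IA' OA IB' OB IA OA' IB OB') := by
  funext a b c d e f g h
  simp only [rrIB', liftA, liftB, rrOpI', mulW8]
  rw [← Finset.mul_sum, mul_div_assoc]

lemma rrOB_mul (T : OpTen IA' OA IA OA') (S : OpTen IB' OB IB OB') :
    rrOB (liftA T * liftB S) = (liftA T * liftB (rrOpO S) :
      WTen IA' OA IB' OB IA OA' IB OB') := by
  funext a b c d e f g h
  simp only [rrOB, liftA, liftB, rrOpO, mulW8]
  rw [← Finset.mul_sum, mul_div_assoc]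

lemma rrIB_mul (T : OpTen IA' OA IA OA') (S : OpTen IB' OB IB OB') :
    rrIB (liftA T * liftB S) = (liftA T * liftB (rrOpI S) :
      WTen IA' OA IB' OB IA OA' IB OB') := by
  funext a b c d e f g h
  simp only [rrIB, liftA, liftB, rrOpI, mulW8]
  rw [← Finset.mul_sum, mul_div_assoc]

lemma rrOB'_mul (T : OpTen IA' OA IA OA') (S : OpTen IB' OB IB OB') :
    rrOB' (liftA T * liftB S) = (liftA T * liftB (rrOpO' S) :
      WTen IA' OA IB' OB IA OA' IB OB') := by
  funext a b c d e f g h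
  simp only [rrOB', liftA, liftB, rrOpO', mulW8]
  rw [← Finset.mul_sum, mul_div_assoc]

lemma LA_mul (T : OpTen IA' OA IA OA') (S : OpTen IB' OB IB OB') :
    LA (liftA T * liftB S) = (liftA (LOp T) * liftB S :
      WTen IA' OA IB' OB IA OA' IB OB') := by
  unfold LA LOp
  rw [rrOA'_mul, rrOA_mul, rrIA_mul]
  funext a b c d e f g h
  simp [liftA, liftB, mulW8, subW8, addW8]
  ring

lemma LB_mul (T : OpTen IA' OA IA OA') (S : OpTen IB' OB IB OB') :
    LB (liftA T * liftB S) = (liftA T * liftB (LOp S) :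
      WTen IA' OA IB' OB IA OA' IB OB') := by
  unfold LB LOp
  rw [rrOB'_mul, rrOB_mul, rrIB_mul]
  funext a b c d e f g h
  simp [liftA, liftB, mulW8, subW8, addW8]
  ring

lemma pairP_rrB_chain (X W : WTen IA' OA IB' OB IA OA' IB OB')
    (h1 : rrOB' X = X) (h2 : rrOB X = X) (h3 : rrIB X = X) (h4 : rrIB' X = X) :
    pairP X W = pairP X (rrB W) := by
  unfold rrB
  calc pairP X W = pairP (rrOB' X) W := by rw [h1]
    _ = pairP X (rrOB' W) := pairP_rrOB' _ _
    _ = pairP (rrOB X) (rrOB' W) := by rw [h2]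
    _ = pairP X (rrOB (rrOB' W)) := pairP_rrOB _ _
    _ = pairP (rrIB X) (rrOB (rrOB' W)) := by rw [h3]
    _ = pairP X (rrIB (rrOB (rrOB' W))) := pairP_rrIB _ _
    _ = pairP (rrIB' X) (rrIB (rrOB (rrOB' W))) := by rw [h4]
    _ = pairP X (rrIB' (rrIB (rrOB (rrOB' W)))) := pairP_rrIB' _ _

lemma pairP_rrA_chain (X W : WTen IA' OA IB' OB IA OA' IB OB')
    (h1 : rrOA' X = X) (h2 : rrOA X = X) (h3 : rrIA X = X) (h4 : rrIA' X = X) :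
    pairP X W = pairP X (rrA W) := by
  unfold rrA
  calc pairP X W = pairP (rrOA' X) W := by rw [h1]
    _ = pairP X (rrOA' W) := pairP_rrOA' _ _
    _ = pairP (rrOA X) (rrOA' W) := by rw [h2]
    _ = pairP X (rrOA (rrOA' W)) := pairP_rrOA _ _
    _ = pairP (rrIA X) (rrOA (rrOA' W)) := by rw [h3]
    _ = pairP X (rrIA (rrOA (rrOA' W))) := pairP_rrIA _ _
    _ = pairP (rrIA' X) (rrIA (rrOA (rrOA' W))) := by rw [h4]
    _ = pairP X (rrIA' (rrIA (rrOA (rrOA' W)))) := pairP_rrIA' _ _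

end Aux9

section Aux10

variable {IA' OA IB' OB IA OA' IB OB' : Type}
variable [Fintype IA'] [Fintype OA] [Fintype IB'] [Fintype OB]
variable [Fintype IA] [Fintype OA'] [Fintype IB] [Fintype OB']
variable [Nonempty IA'] [Nonempty OA] [Nonempty IB'] [Nonempty OB]
variable [Nonempty IA] [Nonempty OA'] [Nonempty IB] [Nonempty OB']

lemma sum_mul_sum_mul {A B : Type} [Fintype A] [Fintype B] (f : A → ℝ) (g : B → ℝ) (w : ℝ) :
    ∑ a, ∑ b, f a * g b * w = (∑ a, f a) * (∑ b, g b) * w := by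
  simp only [Finset.sum_mul, Finset.mul_sum, mul_assoc]
  rw [Finset.sum_comm]

lemma pairP_const_mul (c1 c2 : ℝ) (W : WTen IA' OA IB' OB IA OA' IB OB') :
    pairP (liftA (constOp IA' OA IA OA' c1) * liftB (constOp IB' OB IB OB' c2)) W
      = c1 * c2 * tot W := by
  rw [tot_eq_pairP_aux]
  simp only [pairP, toP, liftA, liftB, constOp, mulW8]
  rw [Finset.mul_sum]

lemma pair_norm (W : WTen IA' OA IB' OB IA OA' IB OB') (hW : IsProcessTensor W)
    (T : OpTen IA' OA IA OA') (S : OpTen IB' OB IB OB')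
    (hT : IsDetOp T) (hS : IsDetOp S) :
    pairP (liftA T * liftB S) W = 1 := by
  obtain ⟨gT1, gT2, gT3⟩ := good_of_det hT
  obtain ⟨gS1, gS2, gS3⟩ := good_of_det hS
  have hLM : LOp (T - constOp IA' OA IA OA' (1 / ((Fintype.card IA : ℝ) * (Fintype.card OA' : ℝ)))) = (T - constOp IA' OA IA OA' (1 / ((Fintype.card IA : ℝ) * (Fintype.card OA' : ℝ)))) := LOp_fix gT2 gT3
  have hLN : LOp (S - constOp IB' OB IB OB' (1 / ((Fintype.card IB : ℝ) * (Fintype.card OB' : ℝ)))) = (S - constOp IB' OB IB OB' (1 / ((Fintype.card IB : ℝ) * (Fintype.card OB' : ℝ)))) := LOp_fix gS2 gS3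
  have expand : liftA T * liftB S =
      (liftA (T - constOp IA' OA IA OA' (1 / ((Fintype.card IA : ℝ) * (Fintype.card OA' : ℝ)))) * liftB (S - constOp IB' OB IB OB' (1 / ((Fintype.card IB : ℝ) * (Fintype.card OB' : ℝ)))) + liftA (T - constOp IA' OA IA OA' (1 / ((Fintype.card IA : ℝ) * (Fintype.card OA' : ℝ)))) * liftB (constOp IB' OB IB OB' (1 / ((Fintype.card IB : ℝ) * (Fintype.card OB' : ℝ)))) +
      liftA (constOp IA' OA IA OA' (1 / ((Fintype.card IA : ℝ) * (Fintype.card OA' : ℝ)))) * liftB (S - constOp IB' OB IB OB' (1 / ((Fintype.card IB : ℝ) * (Fintype.card OB' : ℝ)))) +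
      liftA (constOp IA' OA IA OA' (1 / ((Fintype.card IA : ℝ) * (Fintype.card OA' : ℝ)))) * liftB (constOp IB' OB IB OB' (1 / ((Fintype.card IB : ℝ) * (Fintype.card OB' : ℝ)))) : WTen IA' OA IB' OB IA OA' IB OB') := by
    funext a b c d e f g h
    simp only [liftA, liftB, constOp, mulW8, addW8, subOp4]
    ring
  rw [expand, pairP_add_left, pairP_add_left, pairP_add_left]
  have e1 : LA (liftA (T - constOp IA' OA IA OA' (1 / ((Fintype.card IA : ℝ) * (Fintype.card OA' : ℝ)))) * liftB (S - constOp IB' OB IB OB' (1 / ((Fintype.card IB : ℝ) * (Fintype.card OB' : ℝ))))) = liftA (T - constOp IA' OA IA OA' (1 / ((Fintype.card IA : ℝ) * (Fintype.card OA' : ℝ)))) * liftB (S - constOp IB' OB IB OB' (1 / ((Fintype.card IB : ℝ) * (Fintype.card OB' : ℝ)))) := by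
    rw [LA_mul, hLM]
  have e2 : LB (liftA (T - constOp IA' OA IA OA' (1 / ((Fintype.card IA : ℝ) * (Fintype.card OA' : ℝ)))) * liftB (S - constOp IB' OB IB OB' (1 / ((Fintype.card IB : ℝ) * (Fintype.card OB' : ℝ))))) = liftA (T - constOp IA' OA IA OA' (1 / ((Fintype.card IA : ℝ) * (Fintype.card OA' : ℝ)))) * liftB (S - constOp IB' OB IB OB' (1 / ((Fintype.card IB : ℝ) * (Fintype.card OB' : ℝ)))) := by
    rw [LB_mul, hLN]
  have t1 : pairP (liftA (T - constOp IA' OA IA OA' (1 / ((Fintype.card IA : ℝ) * (Fintype.card OA' : ℝ)))) * liftB (S - constOp IB' OB IB OB' (1 / ((Fintype.card IB : ℝ) * (Fintype.card OB' : ℝ))))) W = 0 := by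
    calc pairP (liftA (T - constOp IA' OA IA OA' (1 / ((Fintype.card IA : ℝ) * (Fintype.card OA' : ℝ)))) * liftB (S - constOp IB' OB IB OB' (1 / ((Fintype.card IB : ℝ) * (Fintype.card OB' : ℝ))))) W
        = pairP (LB (LA (liftA (T - constOp IA' OA IA OA' (1 / ((Fintype.card IA : ℝ) * (Fintype.card OA' : ℝ)))) * liftB (S - constOp IB' OB IB OB' (1 / ((Fintype.card IB : ℝ) * (Fintype.card OB' : ℝ))))))) W := by rw [e1, e2]
      _ = pairP (LA (liftA (T - constOp IA' OA IA OA' (1 / ((Fintype.card IA : ℝ) * (Fintype.card OA' : ℝ)))) * liftB (S - constOp IB' OB IB OB' (1 / ((Fintype.card IB : ℝ) * (Fintype.card OB' : ℝ)))))) (LB W) := pairP_LB _ _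
      _ = pairP (liftA (T - constOp IA' OA IA OA' (1 / ((Fintype.card IA : ℝ) * (Fintype.card OA' : ℝ)))) * liftB (S - constOp IB' OB IB OB' (1 / ((Fintype.card IB : ℝ) * (Fintype.card OB' : ℝ))))) (LA (LB W)) := pairP_LA _ _
      _ = 0 := by rw [hW.2.2.2.2]; exact pairP_zero_right _
  have t2 : pairP (liftA (T - constOp IA' OA IA OA' (1 / ((Fintype.card IA : ℝ) * (Fintype.card OA' : ℝ)))) * liftB (constOp IB' OB IB OB' (1 / ((Fintype.card IB : ℝ) * (Fintype.card OB' : ℝ))))) W = 0 := by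
    have f1 : rrOB' (liftA (T - constOp IA' OA IA OA' (1 / ((Fintype.card IA : ℝ) * (Fintype.card OA' : ℝ)))) * liftB (constOp IB' OB IB OB' (1 / ((Fintype.card IB : ℝ) * (Fintype.card OB' : ℝ))))) = liftA (T - constOp IA' OA IA OA' (1 / ((Fintype.card IA : ℝ) * (Fintype.card OA' : ℝ)))) * liftB (constOp IB' OB IB OB' (1 / ((Fintype.card IB : ℝ) * (Fintype.card OB' : ℝ)))) := by
      rw [rrOB'_mul, rrOpO'_const]
    have f2 : rrOB (liftA (T - constOp IA' OA IA OA' (1 / ((Fintype.card IA : ℝ) * (Fintype.card OA' : ℝ)))) * liftB (constOp IB' OB IB OB' (1 / ((Fintype.card IB : ℝ) * (Fintype.card OB' : ℝ))))) = liftA (T - constOp IA' OA IA OA' (1 / ((Fintype.card IA : ℝ) * (Fintype.card OA' : ℝ)))) * liftB (constOp IB' OB IB OB' (1 / ((Fintype.card IB : ℝ) * (Fintype.card OB' : ℝ)))) := by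
      rw [rrOB_mul, rrOpO_const]
    have f3 : rrIB (liftA (T - constOp IA' OA IA OA' (1 / ((Fintype.card IA : ℝ) * (Fintype.card OA' : ℝ)))) * liftB (constOp IB' OB IB OB' (1 / ((Fintype.card IB : ℝ) * (Fintype.card OB' : ℝ))))) = liftA (T - constOp IA' OA IA OA' (1 / ((Fintype.card IA : ℝ) * (Fintype.card OA' : ℝ)))) * liftB (constOp IB' OB IB OB' (1 / ((Fintype.card IB : ℝ) * (Fintype.card OB' : ℝ)))) := by
      rw [rrIB_mul, rrOpI_const]
    have f4 : rrIB' (liftA (T - constOp IA' OA IA OA' (1 / ((Fintype.card IA : ℝ) * (Fintype.card OA' : ℝ)))) * liftB (constOp IB' OB IB OB' (1 / ((Fintype.card IB : ℝ) * (Fintype.card OB' : ℝ))))) = liftA (T - constOp IA' OA IA OA' (1 / ((Fintype.card IA : ℝ) * (Fintype.card OA' : ℝ)))) * liftB (constOp IB' OB IB OB' (1 / ((Fintype.card IB : ℝ) * (Fintype.card OB' : ℝ)))) := by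
      rw [rrIB'_mul, rrOpI'_const]
    have e3 : LA (liftA (T - constOp IA' OA IA OA' (1 / ((Fintype.card IA : ℝ) * (Fintype.card OA' : ℝ)))) * liftB (constOp IB' OB IB OB' (1 / ((Fintype.card IB : ℝ) * (Fintype.card OB' : ℝ))))) = liftA (T - constOp IA' OA IA OA' (1 / ((Fintype.card IA : ℝ) * (Fintype.card OA' : ℝ)))) * liftB (constOp IB' OB IB OB' (1 / ((Fintype.card IB : ℝ) * (Fintype.card OB' : ℝ)))) := by
      rw [LA_mul, hLM]
    calc pairP (liftA (T - constOp IA' OA IA OA' (1 / ((Fintype.card IA : ℝ) * (Fintype.card OA' : ℝ)))) * liftB (constOp IB' OB IB OB' (1 / ((Fintype.card IB : ℝ) * (Fintype.card OB' : ℝ))))) W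
        = pairP (LA (liftA (T - constOp IA' OA IA OA' (1 / ((Fintype.card IA : ℝ) * (Fintype.card OA' : ℝ)))) * liftB (constOp IB' OB IB OB' (1 / ((Fintype.card IB : ℝ) * (Fintype.card OB' : ℝ)))))) W := by rw [e3]
      _ = pairP (liftA (T - constOp IA' OA IA OA' (1 / ((Fintype.card IA : ℝ) * (Fintype.card OA' : ℝ)))) * liftB (constOp IB' OB IB OB' (1 / ((Fintype.card IB : ℝ) * (Fintype.card OB' : ℝ))))) (LA W) := pairP_LA _ _
      _ = pairP (liftA (T - constOp IA' OA IA OA' (1 / ((Fintype.card IA : ℝ) * (Fintype.card OA' : ℝ)))) * liftB (constOp IB' OB IB OB' (1 / ((Fintype.card IB : ℝ) * (Fintype.card OB' : ℝ))))) (rrB (LA W)) := pairP_rrB_chain _ _ f1 f2 f3 f4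
      _ = 0 := by rw [hW.2.2.2.1]; exact pairP_zero_right _
  have t3 : pairP (liftA (constOp IA' OA IA OA' (1 / ((Fintype.card IA : ℝ) * (Fintype.card OA' : ℝ)))) * liftB (S - constOp IB' OB IB OB' (1 / ((Fintype.card IB : ℝ) * (Fintype.card OB' : ℝ))))) W = 0 := by
    have f1 : rrOA' (liftA (constOp IA' OA IA OA' (1 / ((Fintype.card IA : ℝ) * (Fintype.card OA' : ℝ)))) * liftB (S - constOp IB' OB IB OB' (1 / ((Fintype.card IB : ℝ) * (Fintype.card OB' : ℝ))))) = liftA (constOp IA' OA IA OA' (1 / ((Fintype.card IA : ℝ) * (Fintype.card OA' : ℝ)))) * liftB (S - constOp IB' OB IB OB' (1 / ((Fintype.card IB : ℝ) * (Fintype.card OB' : ℝ)))) := by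
      rw [rrOA'_mul, rrOpO'_const]
    have f2 : rrOA (liftA (constOp IA' OA IA OA' (1 / ((Fintype.card IA : ℝ) * (Fintype.card OA' : ℝ)))) * liftB (S - constOp IB' OB IB OB' (1 / ((Fintype.card IB : ℝ) * (Fintype.card OB' : ℝ))))) = liftA (constOp IA' OA IA OA' (1 / ((Fintype.card IA : ℝ) * (Fintype.card OA' : ℝ)))) * liftB (S - constOp IB' OB IB OB' (1 / ((Fintype.card IB : ℝ) * (Fintype.card OB' : ℝ)))) := by
      rw [rrOA_mul, rrOpO_const]
    have f3 : rrIA (liftA (constOp IA' OA IA OA' (1 / ((Fintype.card IA : ℝ) * (Fintype.card OA' : ℝ)))) * liftB (S - constOp IB' OB IB OB' (1 / ((Fintype.card IB : ℝ) * (Fintype.card OB' : ℝ))))) = liftA (constOp IA' OA IA OA' (1 / ((Fintype.card IA : ℝ) * (Fintype.card OA' : ℝ)))) * liftB (S - constOp IB' OB IB OB' (1 / ((Fintype.card IB : ℝ) * (Fintype.card OB' : ℝ)))) := by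
      rw [rrIA_mul, rrOpI_const]
    have f4 : rrIA' (liftA (constOp IA' OA IA OA' (1 / ((Fintype.card IA : ℝ) * (Fintype.card OA' : ℝ)))) * liftB (S - constOp IB' OB IB OB' (1 / ((Fintype.card IB : ℝ) * (Fintype.card OB' : ℝ))))) = liftA (constOp IA' OA IA OA' (1 / ((Fintype.card IA : ℝ) * (Fintype.card OA' : ℝ)))) * liftB (S - constOp IB' OB IB OB' (1 / ((Fintype.card IB : ℝ) * (Fintype.card OB' : ℝ)))) := by
      rw [rrIA'_mul, rrOpI'_const]
    have e4 : LB (liftA (constOp IA' OA IA OA' (1 / ((Fintype.card IA : ℝ) * (Fintype.card OA' : ℝ)))) * liftB (S - constOp IB' OB IB OB' (1 / ((Fintype.card IB : ℝ) * (Fintype.card OB' : ℝ))))) = liftA (constOp IA' OA IA OA' (1 / ((Fintype.card IA : ℝ) * (Fintype.card OA' : ℝ)))) * liftB (S - constOp IB' OB IB OB' (1 / ((Fintype.card IB : ℝ) * (Fintype.card OB' : ℝ)))) := by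
      rw [LB_mul, hLN]
    calc pairP (liftA (constOp IA' OA IA OA' (1 / ((Fintype.card IA : ℝ) * (Fintype.card OA' : ℝ)))) * liftB (S - constOp IB' OB IB OB' (1 / ((Fintype.card IB : ℝ) * (Fintype.card OB' : ℝ))))) W
        = pairP (LB (liftA (constOp IA' OA IA OA' (1 / ((Fintype.card IA : ℝ) * (Fintype.card OA' : ℝ)))) * liftB (S - constOp IB' OB IB OB' (1 / ((Fintype.card IB : ℝ) * (Fintype.card OB' : ℝ)))))) W := by rw [e4]
      _ = pairP (liftA (constOp IA' OA IA OA' (1 / ((Fintype.card IA : ℝ) * (Fintype.card OA' : ℝ)))) * liftB (S - constOp IB' OB IB OB' (1 / ((Fintype.card IB : ℝ) * (Fintype.card OB' : ℝ))))) (LB W) := pairP_LB _ _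
      _ = pairP (liftA (constOp IA' OA IA OA' (1 / ((Fintype.card IA : ℝ) * (Fintype.card OA' : ℝ)))) * liftB (S - constOp IB' OB IB OB' (1 / ((Fintype.card IB : ℝ) * (Fintype.card OB' : ℝ))))) (rrA (LB W)) := pairP_rrA_chain _ _ f1 f2 f3 f4
      _ = 0 := by rw [hW.2.2.1]; exact pairP_zero_right _
  have t4 : pairP (liftA (constOp IA' OA IA OA' (1 / ((Fintype.card IA : ℝ) * (Fintype.card OA' : ℝ)))) * liftB (constOp IB' OB IB OB' (1 / ((Fintype.card IB : ℝ) * (Fintype.card OB' : ℝ))))) W = 1 := by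
    rw [pairP_const_mul, hW.2.1]
    have hne : ((Fintype.card IA : ℝ) * (Fintype.card OA' : ℝ)) *
        ((Fintype.card IB : ℝ) * (Fintype.card OB' : ℝ)) ≠ 0 :=
      mul_ne_zero (mul_ne_zero (card_ne_zero' IA) (card_ne_zero' OA'))
        (mul_ne_zero (card_ne_zero' IB) (card_ne_zero' OB'))
    rw [div_mul_div_comm, one_mul, div_mul_eq_mul_div, one_mul, div_eq_one_iff_eq hne]
    ring
  rw [t1, t2, t3, t4]
  norm_num

lemma corr_sum {A X B Y : Type} [Fintype A] [Fintype B]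
    (TA : A → X → OpTen IA' OA IA OA') (TB : B → Y → OpTen IB' OB IB OB')
    (W : WTen IA' OA IB' OB IA OA' IB OB') (x : X) (y : Y) :
    (∑ a, ∑ b, corr TA TB W a b x y) =
      pairP (liftA (fun i' o i o' => ∑ a, TA a x i' o i o') *
        liftB (fun i' o i o' => ∑ b, TB b y i' o i o')) W := by
  have hc : ∀ (a : A) (b : B), corr TA TB W a b x y =
      ∑ p, toP (liftA (TA a x) * liftB (TB b y) : WTen IA' OA IB' OB IA OA' IB OB') p
        * toP W p := by
    intro a b
    exact nested8 (fun ia' oa ib' ob ia oa' ib ob' =>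
      TA a x ia' oa ia oa' * TB b y ib' ob ib ob' * W ia' oa ib' ob ia oa' ib ob')
  simp only [hc]
  have step1 : (∑ a : A, ∑ b : B, ∑ p, toP (liftA (TA a x) * liftB (TB b y) :
      WTen IA' OA IB' OB IA OA' IB OB') p * toP W p)
      = ∑ p, ∑ a : A, ∑ b : B, toP (liftA (TA a x) * liftB (TB b y) :
      WTen IA' OA IB' OB IA OA' IB OB') p * toP W p := by
    exact (Finset.sum_congr rfl fun a _ => Finset.sum_comm).trans Finset.sum_comm
  rw [step1]
  refine Finset.sum_congr rfl fun p _ => ?_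
  show (∑ a : A, ∑ b : B, TA a x p.1 p.2.1 p.2.2.2.2.1 p.2.2.2.2.2.1 *
      TB b y p.2.2.1 p.2.2.2.1 p.2.2.2.2.2.2.1 p.2.2.2.2.2.2.2 * toP W p) =
    (∑ a : A, TA a x p.1 p.2.1 p.2.2.2.2.1 p.2.2.2.2.2.1) *
      (∑ b : B, TB b y p.2.2.1 p.2.2.2.1 p.2.2.2.2.2.2.1 p.2.2.2.2.2.2.2) * toP W p
  exact sum_mul_sum_mul _ _ _

end Aux10

section Aux11Op
variable {I' O I O' : Type}
variable [Fintype I'] [Fintype O] [Fintype I] [Fintype O']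
variable [Nonempty I'] [Nonempty O] [Nonempty I] [Nonempty O']

lemma ite01_nonneg {P : Prop} [Decidable P] : (0 : ℝ) ≤ if P then 1 else 0 := by
  split <;> norm_num

/-- Fully deterministic "delta" operation tensor. -/
def deltaOp4 (a : I') (b : O) (c : I) (d : O') : OpTen I' O I O' :=
  fun i' o i o' => (if i' = a then (1 : ℝ) else 0) * (if o = b then (1 : ℝ) else 0) *
    (if i = c then (1 : ℝ) else 0) * (if o' = d then (1 : ℝ) else 0)

lemma deltaOp4_nonneg (a : I') (b : O) (c : I) (d : O') (i' o i o') :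
    (0 : ℝ) ≤ deltaOp4 a b c d i' o i o' :=
  mul_nonneg (mul_nonneg (mul_nonneg ite01_nonneg ite01_nonneg) ite01_nonneg) ite01_nonneg

lemma sum_deltaOp4 (c : I) (d : O') :
    (fun i' o i o' => ∑ ab : I' × O, deltaOp4 ab.1 ab.2 c d i' o i o') =
      (deltaIn c d : OpTen I' O I O') := by
  funext i' o i o'
  simp [deltaOp4, deltaIn, Fintype.sum_prod_type, mul_ite, ite_mul, zero_mul, mul_zero,
    one_mul, mul_one, Finset.sum_ite_eq, Finset.mem_univ]

lemma sum_punit_op (T : OpTen I' O I O') :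
    (fun i' o i o' => ∑ _a : PUnit, T i' o i o') = T := by
  funext i' o i o'
  simp

lemma localops_single (T : OpTen I' O I O') (hT : IsDetOp T)
    (hnn : ∀ i' o i o', 0 ≤ T i' o i o') :
    IsLocalOps (fun (_ : PUnit) (_ : PUnit) => T) := by
  refine ⟨fun _ _ i' o i o' => hnn i' o i o', fun x => ?_⟩
  rw [sum_punit_op]
  exact hT

lemma uniform_localops :
    IsLocalOps (fun (_ : PUnit) (_ : PUnit) =>
      constOp I' O I O' (1 / ((Fintype.card I : ℝ) * (Fintype.card O' : ℝ)))) := by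
  refine localops_single _ det_const fun i' o i o' => ?_
  have h1 : (0:ℝ) < (Fintype.card I : ℝ) := by exact_mod_cast Fintype.card_pos
  have h2 : (0:ℝ) < (Fintype.card O' : ℝ) := by exact_mod_cast Fintype.card_pos
  show (0:ℝ) ≤ 1 / ((Fintype.card I : ℝ) * (Fintype.card O' : ℝ))
  positivity

lemma delta_localops :
    IsLocalOps (fun (a : I' × O) (x : I × O') => (deltaOp4 a.1 a.2 x.1 x.2 :
      OpTen I' O I O')) := by
  refine ⟨fun a x i' o i o' => deltaOp4_nonneg _ _ _ _ _ _ _ _, fun x => ?_⟩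
  rw [show (fun i' o i o' => ∑ a : I' × O, deltaOp4 a.1 a.2 x.1 x.2 i' o i o') =
    (deltaIn x.1 x.2 : OpTen I' O I O') from sum_deltaOp4 x.1 x.2]
  exact det_deltaIn x.1 x.2

lemma perturb_localops (R : OpTen I' O I O') :
    ∃ e : ℝ, 0 < e ∧ IsLocalOps (fun (_ : PUnit) (_ : PUnit) =>
      constOp I' O I O' (1 / ((Fintype.card I : ℝ) * (Fintype.card O' : ℝ))) + e • LOp R) := by
  obtain ⟨g1, g2, g3⟩ := good_LOp R
  have h1 : (0:ℝ) < (Fintype.card I : ℝ) := by exact_mod_cast Fintype.card_pos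
  have h2 : (0:ℝ) < (Fintype.card O' : ℝ) := by exact_mod_cast Fintype.card_pos
  set c : ℝ := 1 / ((Fintype.card I : ℝ) * (Fintype.card O' : ℝ)) with hc
  have hcpos : 0 < c := by rw [hc]; positivity
  set Bnd : ℝ := ∑ p : I' × O × I × O', |LOp R p.1 p.2.1 p.2.2.1 p.2.2.2| with hBnd
  have hBnd0 : 0 ≤ Bnd := Finset.sum_nonneg fun p _ => abs_nonneg _
  have habs : ∀ i' o i o', |LOp R i' o i o'| ≤ Bnd := by
    intro i' o i o'
    simpa using Finset.single_le_sum (f := fun p : I' × O × I × O' =>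
      |LOp R p.1 p.2.1 p.2.2.1 p.2.2.2|) (fun p _ => abs_nonneg _)
      (Finset.mem_univ (i', o, i, o'))
  refine ⟨c / (Bnd + 1), div_pos hcpos (by linarith), ?_⟩
  refine localops_single _ (det_of_good g1 g2 g3 _) fun i' o i o' => ?_
  show (0:ℝ) ≤ (constOp I' O I O' c + (c / (Bnd + 1)) • LOp R) i' o i o'
  have expand : (constOp I' O I O' c + (c / (Bnd + 1)) • LOp R) i' o i o' =
      c + (c / (Bnd + 1)) * LOp R i' o i o' := rfl
  rw [expand]
  have hdiv : 0 ≤ c / (Bnd + 1) := le_of_lt (div_pos hcpos (by linarith))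
  have key : (c / (Bnd + 1)) * Bnd ≤ c := by
    rw [div_mul_eq_mul_div, div_le_iff₀ (by linarith)]
    nlinarith
  have key2 : (c / (Bnd + 1)) * |LOp R i' o i o'| ≤ (c / (Bnd + 1)) * Bnd :=
    mul_le_mul_of_nonneg_left (habs i' o i o') hdiv
  have key3 := neg_abs_le (LOp R i' o i o')
  nlinarith

end Aux11Op

section Aux12

variable {IA' OA IB' OB IA OA' IB OB' : Type}
variable [Fintype IA'] [Fintype OA] [Fintype IB'] [Fintype OB]
variable [Fintype IA] [Fintype OA'] [Fintype IB] [Fintype OB']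
variable [Nonempty IA'] [Nonempty OA] [Nonempty IB'] [Nonempty OB]
variable [Nonempty IA] [Nonempty OA'] [Nonempty IB] [Nonempty OB']

lemma pairP_nested (Z U : WTen IA' OA IB' OB IA OA' IB OB') :
    pairP Z U = ∑ ia', ∑ oa, ∑ ib', ∑ ob, ∑ ia, ∑ oa', ∑ ib, ∑ ob',
      Z ia' oa ib' ob ia oa' ib ob' * U ia' oa ib' ob ia oa' ib ob' :=
  (nested8 (fun ia' oa ib' ob ia oa' ib ob' =>
    Z ia' oa ib' ob ia oa' ib ob' * U ia' oa ib' ob ia oa' ib ob')).symm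

lemma pairP_delta_delta (U : WTen IA' OA IB' OB IA OA' IB OB')
    (a1 : IA') (a2 : OA) (a3 : IA) (a4 : OA') (b1 : IB') (b2 : OB) (b3 : IB) (b4 : OB') :
    pairP (liftA (deltaOp4 a1 a2 a3 a4) * liftB (deltaOp4 b1 b2 b3 b4)) U =
      U a1 a2 b1 b2 a3 a4 b3 b4 := by
  rw [pairP_nested]
  simp [liftA, liftB, deltaOp4, mulW8, mul_ite, ite_mul, zero_mul, mul_zero, one_mul,
    mul_one, Finset.sum_ite_eq', Finset.mem_univ]

lemma pairP_deltaA_const (U : WTen IA' OA IB' OB IA OA' IB OB') (c : ℝ)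
    (a1 : IA') (a2 : OA) (a3 : IA) (a4 : OA') :
    pairP (liftA (deltaOp4 a1 a2 a3 a4) * liftB (constOp IB' OB IB OB' c)) U =
      c * ∑ w1, ∑ w2, ∑ w3, ∑ w4, U a1 a2 w1 w2 a3 a4 w3 w4 := by
  rw [pairP_nested]
  simp [liftA, liftB, deltaOp4, constOp, mulW8, mul_ite, ite_mul, zero_mul, mul_zero,
    one_mul, mul_one, Finset.sum_ite_eq', Finset.mem_univ, Finset.mul_sum]

lemma pairP_deltaB_const (U : WTen IA' OA IB' OB IA OA' IB OB') (c : ℝ)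
    (b1 : IB') (b2 : OB) (b3 : IB) (b4 : OB') :
    pairP (liftA (constOp IA' OA IA OA' c) * liftB (deltaOp4 b1 b2 b3 b4)) U =
      c * ∑ w1, ∑ w2, ∑ w3, ∑ w4, U w1 w2 b1 b2 w3 w4 b3 b4 := by
  rw [pairP_nested]
  simp [liftA, liftB, deltaOp4, constOp, mulW8, mul_ite, ite_mul, zero_mul, mul_zero,
    one_mul, mul_one, Finset.sum_ite_eq', Finset.mem_univ, Finset.mul_sum]

lemma corr_delta (W : WTen IA' OA IB' OB IA OA' IB OB')
    (a : IA' × OA) (b : IB' × OB) (x : IA × OA') (y : IB × OB') :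
    corr (fun a x => deltaOp4 a.1 a.2 x.1 x.2) (fun b y => deltaOp4 b.1 b.2 y.1 y.2)
      W a b x y = W a.1 a.2 b.1 b.2 x.1 x.2 y.1 y.2 := by
  rw [show corr (fun a x => deltaOp4 a.1 a.2 x.1 x.2) (fun b y => deltaOp4 b.1 b.2 y.1 y.2)
      W a b x y = pairP (liftA (deltaOp4 a.1 a.2 x.1 x.2) * liftB (deltaOp4 b.1 b.2 y.1 y.2)) W
    from nested8 (fun ia' oa ib' ob ia oa' ib ob' =>
      deltaOp4 a.1 a.2 x.1 x.2 ia' oa ia oa' * deltaOp4 b.1 b.2 y.1 y.2 ib' ob ib ob' *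
        W ia' oa ib' ob ia oa' ib ob'), pairP_delta_delta]

lemma corr_single (T : OpTen IA' OA IA OA') (S : OpTen IB' OB IB OB')
    (W : WTen IA' OA IB' OB IA OA' IB OB') :
    (∑ a : PUnit, ∑ b : PUnit, corr (fun (_ : PUnit) (_ : PUnit) => T)
      (fun (_ : PUnit) (_ : PUnit) => S) W a b PUnit.unit PUnit.unit) =
      pairP (liftA T * liftB S) W := by
  calc (∑ a : PUnit, ∑ b : PUnit, corr (fun (_ : PUnit) (_ : PUnit) => T)
      (fun (_ : PUnit) (_ : PUnit) => S) W a b PUnit.unit PUnit.unit)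
      = corr (fun (_ : PUnit) (_ : PUnit) => T) (fun (_ : PUnit) (_ : PUnit) => S) W
        PUnit.unit PUnit.unit PUnit.unit PUnit.unit := by simp
    _ = pairP (liftA T * liftB S) W := by
      rw [pairP_nested]
      rfl

lemma extract_rrB_LA (W : WTen IA' OA IB' OB IA OA' IB OB')
    (hAll : ∀ R : OpTen IA' OA IA OA',
      pairP (liftA (LOp R) * liftB (constOp IB' OB IB OB' (1 / ((Fintype.card IB : ℝ) * (Fintype.card OB' : ℝ))))) W = 0) :
    rrB (LA W) = 0 := by
  have h1 : (0:ℝ) < (Fintype.card IB : ℝ) := by exact_mod_cast Fintype.card_pos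
  have h2 : (0:ℝ) < (Fintype.card OB' : ℝ) := by exact_mod_cast Fintype.card_pos
  funext a1 a2 b1 b2 a3 a4 b3 b4
  show rrB (LA W) a1 a2 b1 b2 a3 a4 b3 b4 = (0:ℝ)
  have h := hAll (deltaOp4 a1 a2 a3 a4)
  rw [show (liftA (LOp (deltaOp4 a1 a2 a3 a4)) * liftB (constOp IB' OB IB OB' (1 / ((Fintype.card IB : ℝ) * (Fintype.card OB' : ℝ)))) :
      WTen IA' OA IB' OB IA OA' IB OB') =
      LA (liftA (deltaOp4 a1 a2 a3 a4) * liftB (constOp IB' OB IB OB' (1 / ((Fintype.card IB : ℝ) * (Fintype.card OB' : ℝ)))))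
    from (LA_mul _ _).symm, pairP_LA] at h
  have f1 : rrOB' (liftA (deltaOp4 a1 a2 a3 a4) * liftB (constOp IB' OB IB OB' (1 / ((Fintype.card IB : ℝ) * (Fintype.card OB' : ℝ))))) =
      liftA (deltaOp4 a1 a2 a3 a4) * liftB (constOp IB' OB IB OB' (1 / ((Fintype.card IB : ℝ) * (Fintype.card OB' : ℝ)))) := by
    rw [rrOB'_mul, rrOpO'_const]
  have f2 : rrOB (liftA (deltaOp4 a1 a2 a3 a4) * liftB (constOp IB' OB IB OB' (1 / ((Fintype.card IB : ℝ) * (Fintype.card OB' : ℝ))))) =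
      liftA (deltaOp4 a1 a2 a3 a4) * liftB (constOp IB' OB IB OB' (1 / ((Fintype.card IB : ℝ) * (Fintype.card OB' : ℝ)))) := by
    rw [rrOB_mul, rrOpO_const]
  have f3 : rrIB (liftA (deltaOp4 a1 a2 a3 a4) * liftB (constOp IB' OB IB OB' (1 / ((Fintype.card IB : ℝ) * (Fintype.card OB' : ℝ))))) =
      liftA (deltaOp4 a1 a2 a3 a4) * liftB (constOp IB' OB IB OB' (1 / ((Fintype.card IB : ℝ) * (Fintype.card OB' : ℝ)))) := by
    rw [rrIB_mul, rrOpI_const]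
  have f4 : rrIB' (liftA (deltaOp4 a1 a2 a3 a4) * liftB (constOp IB' OB IB OB' (1 / ((Fintype.card IB : ℝ) * (Fintype.card OB' : ℝ))))) =
      liftA (deltaOp4 a1 a2 a3 a4) * liftB (constOp IB' OB IB OB' (1 / ((Fintype.card IB : ℝ) * (Fintype.card OB' : ℝ)))) := by
    rw [rrIB'_mul, rrOpI'_const]
  rw [pairP_rrB_chain _ (LA W) f1 f2 f3 f4, pairP_deltaA_const] at h
  have hS : (∑ w1 : IB', ∑ w2 : OB, ∑ w3 : IB, ∑ w4 : OB',
      rrB (LA W) a1 a2 w1 w2 a3 a4 w3 w4) = 0 := by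
    rcases mul_eq_zero.mp h with h' | h'
    · exact absurd h' (by positivity)
    · exact h'
  have hconstsum : (∑ w1 : IB', ∑ w2 : OB, ∑ w3 : IB, ∑ w4 : OB',
      rrB (LA W) a1 a2 w1 w2 a3 a4 w3 w4) =
      ((Fintype.card IB' : ℝ) * (Fintype.card OB : ℝ) * (Fintype.card IB : ℝ) *
        (Fintype.card OB' : ℝ)) * rrB (LA W) a1 a2 b1 b2 a3 a4 b3 b4 := by
    calc (∑ w1 : IB', ∑ w2 : OB, ∑ w3 : IB, ∑ w4 : OB',
        rrB (LA W) a1 a2 w1 w2 a3 a4 w3 w4)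
        = ∑ _w1 : IB', ∑ _w2 : OB, ∑ _w3 : IB, ∑ _w4 : OB',
          rrB (LA W) a1 a2 b1 b2 a3 a4 b3 b4 :=
        Finset.sum_congr rfl fun _ _ => Finset.sum_congr rfl fun _ _ =>
          Finset.sum_congr rfl fun _ _ => Finset.sum_congr rfl fun _ _ => rfl
      _ = _ := by
        simp only [Finset.sum_const, Finset.card_univ, nsmul_eq_mul]
        ring
  rw [hconstsum] at hS
  have hNe : ((Fintype.card IB' : ℝ) * (Fintype.card OB : ℝ) * (Fintype.card IB : ℝ) *
      (Fintype.card OB' : ℝ)) ≠ 0 := by positivity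
  exact (mul_eq_zero.mp hS).resolve_left hNe

lemma extract_rrA_LB (W : WTen IA' OA IB' OB IA OA' IB OB')
    (hAll : ∀ R' : OpTen IB' OB IB OB',
      pairP (liftA (constOp IA' OA IA OA' (1 / ((Fintype.card IA : ℝ) * (Fintype.card OA' : ℝ)))) * liftB (LOp R')) W = 0) :
    rrA (LB W) = 0 := by
  have h1 : (0:ℝ) < (Fintype.card IA : ℝ) := by exact_mod_cast Fintype.card_pos
  have h2 : (0:ℝ) < (Fintype.card OA' : ℝ) := by exact_mod_cast Fintype.card_pos
  funext a1 a2 b1 b2 a3 a4 b3 b4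
  show rrA (LB W) a1 a2 b1 b2 a3 a4 b3 b4 = (0:ℝ)
  have h := hAll (deltaOp4 b1 b2 b3 b4)
  rw [show (liftA (constOp IA' OA IA OA' (1 / ((Fintype.card IA : ℝ) * (Fintype.card OA' : ℝ)))) * liftB (LOp (deltaOp4 b1 b2 b3 b4)) :
      WTen IA' OA IB' OB IA OA' IB OB') =
      LB (liftA (constOp IA' OA IA OA' (1 / ((Fintype.card IA : ℝ) * (Fintype.card OA' : ℝ)))) * liftB (deltaOp4 b1 b2 b3 b4))
    from (LB_mul _ _).symm, pairP_LB] at h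
  have f1 : rrOA' (liftA (constOp IA' OA IA OA' (1 / ((Fintype.card IA : ℝ) * (Fintype.card OA' : ℝ)))) * liftB (deltaOp4 b1 b2 b3 b4)) =
      liftA (constOp IA' OA IA OA' (1 / ((Fintype.card IA : ℝ) * (Fintype.card OA' : ℝ)))) * liftB (deltaOp4 b1 b2 b3 b4) := by
    rw [rrOA'_mul, rrOpO'_const]
  have f2 : rrOA (liftA (constOp IA' OA IA OA' (1 / ((Fintype.card IA : ℝ) * (Fintype.card OA' : ℝ)))) * liftB (deltaOp4 b1 b2 b3 b4)) =
      liftA (constOp IA' OA IA OA' (1 / ((Fintype.card IA : ℝ) * (Fintype.card OA' : ℝ)))) * liftB (deltaOp4 b1 b2 b3 b4) := by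
    rw [rrOA_mul, rrOpO_const]
  have f3 : rrIA (liftA (constOp IA' OA IA OA' (1 / ((Fintype.card IA : ℝ) * (Fintype.card OA' : ℝ)))) * liftB (deltaOp4 b1 b2 b3 b4)) =
      liftA (constOp IA' OA IA OA' (1 / ((Fintype.card IA : ℝ) * (Fintype.card OA' : ℝ)))) * liftB (deltaOp4 b1 b2 b3 b4) := by
    rw [rrIA_mul, rrOpI_const]
  have f4 : rrIA' (liftA (constOp IA' OA IA OA' (1 / ((Fintype.card IA : ℝ) * (Fintype.card OA' : ℝ)))) * liftB (deltaOp4 b1 b2 b3 b4)) =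
      liftA (constOp IA' OA IA OA' (1 / ((Fintype.card IA : ℝ) * (Fintype.card OA' : ℝ)))) * liftB (deltaOp4 b1 b2 b3 b4) := by
    rw [rrIA'_mul, rrOpI'_const]
  rw [pairP_rrA_chain _ (LB W) f1 f2 f3 f4, pairP_deltaB_const] at h
  have hS : (∑ w1 : IA', ∑ w2 : OA, ∑ w3 : IA, ∑ w4 : OA',
      rrA (LB W) w1 w2 b1 b2 w3 w4 b3 b4) = 0 := by
    rcases mul_eq_zero.mp h with h' | h'
    · exact absurd h' (by positivity)
    · exact h'
  have hconstsum : (∑ w1 : IA', ∑ w2 : OA, ∑ w3 : IA, ∑ w4 : OA',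
      rrA (LB W) w1 w2 b1 b2 w3 w4 b3 b4) =
      ((Fintype.card IA' : ℝ) * (Fintype.card OA : ℝ) * (Fintype.card IA : ℝ) *
        (Fintype.card OA' : ℝ)) * rrA (LB W) a1 a2 b1 b2 a3 a4 b3 b4 := by
    calc (∑ w1 : IA', ∑ w2 : OA, ∑ w3 : IA, ∑ w4 : OA',
        rrA (LB W) w1 w2 b1 b2 w3 w4 b3 b4)
        = ∑ _w1 : IA', ∑ _w2 : OA, ∑ _w3 : IA, ∑ _w4 : OA',
          rrA (LB W) a1 a2 b1 b2 a3 a4 b3 b4 :=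
        Finset.sum_congr rfl fun _ _ => Finset.sum_congr rfl fun _ _ =>
          Finset.sum_congr rfl fun _ _ => Finset.sum_congr rfl fun _ _ => rfl
      _ = _ := by
        simp only [Finset.sum_const, Finset.card_univ, nsmul_eq_mul]
        ring
  rw [hconstsum] at hS
  have hNe : ((Fintype.card IA' : ℝ) * (Fintype.card OA : ℝ) * (Fintype.card IA : ℝ) *
      (Fintype.card OA' : ℝ)) ≠ 0 := by positivity
  exact (mul_eq_zero.mp hS).resolve_left hNe

lemma extract_LALB (W : WTen IA' OA IB' OB IA OA' IB OB')
    (hAll : ∀ (R : OpTen IA' OA IA OA') (R' : OpTen IB' OB IB OB'),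
      pairP (liftA (LOp R) * liftB (LOp R')) W = 0) :
    LA (LB W) = 0 := by
  funext a1 a2 b1 b2 a3 a4 b3 b4
  show LA (LB W) a1 a2 b1 b2 a3 a4 b3 b4 = (0:ℝ)
  have h := hAll (deltaOp4 a1 a2 a3 a4) (deltaOp4 b1 b2 b3 b4)
  rw [show (liftA (LOp (deltaOp4 a1 a2 a3 a4)) * liftB (LOp (deltaOp4 b1 b2 b3 b4)) :
      WTen IA' OA IB' OB IA OA' IB OB') =
      LB (LA (liftA (deltaOp4 a1 a2 a3 a4) * liftB (deltaOp4 b1 b2 b3 b4)))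
    from by rw [LA_mul, LB_mul], pairP_LB, pairP_LA, pairP_delta_delta] at h
  exact h

end Aux12


theorem statement_0
    {IA' OA IB' OB IA OA' IB OB' : Type}
    [Fintype IA'] [Fintype OA] [Fintype IB'] [Fintype OB]
    [Fintype IA] [Fintype OA'] [Fintype IB] [Fintype OB']
    [Nonempty IA'] [Nonempty OA] [Nonempty IB'] [Nonempty OB]
    [Nonempty IA] [Nonempty OA'] [Nonempty IB] [Nonempty OB']
    (W : WTen IA' OA IB' OB IA OA' IB OB') :
    (∀ (X A Y B : Type) [Fintype X] [Nonempty X] [Fintype A] [Nonempty A]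
        [Fintype Y] [Nonempty Y] [Fintype B] [Nonempty B]
        (TA : A → X → OpTen IA' OA IA OA') (TB : B → Y → OpTen IB' OB IB OB'),
        IsLocalOps TA → IsLocalOps TB →
        ((∀ a b x y, 0 ≤ corr TA TB W a b x y) ∧
          ∀ x y, ∑ a, ∑ b, corr TA TB W a b x y = 1)) ↔
      IsProcessTensor W := by
  constructor
  · intro H
    have hIA : (0:ℝ) < (Fintype.card IA : ℝ) := by exact_mod_cast Fintype.card_pos
    have hOA' : (0:ℝ) < (Fintype.card OA' : ℝ) := by exact_mod_cast Fintype.card_pos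
    have hIB : (0:ℝ) < (Fintype.card IB : ℝ) := by exact_mod_cast Fintype.card_pos
    have hOB' : (0:ℝ) < (Fintype.card OB' : ℝ) := by exact_mod_cast Fintype.card_pos
    have hnormUU : pairP (liftA (constOp IA' OA IA OA' (1 / ((Fintype.card IA : ℝ) * (Fintype.card OA' : ℝ)))) * liftB (constOp IB' OB IB OB' (1 / ((Fintype.card IB : ℝ) * (Fintype.card OB' : ℝ))))) W = 1 := by
      have h := (H PUnit PUnit PUnit PUnit (fun _ _ => constOp IA' OA IA OA' (1 / ((Fintype.card IA : ℝ) * (Fintype.card OA' : ℝ)))) (fun _ _ => constOp IB' OB IB OB' (1 / ((Fintype.card IB : ℝ) * (Fintype.card OB' : ℝ))))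
        uniform_localops uniform_localops).2 PUnit.unit PUnit.unit
      rwa [corr_single] at h
    have keyA : ∀ R : OpTen IA' OA IA OA',
        pairP (liftA (LOp R) * liftB (constOp IB' OB IB OB' (1 / ((Fintype.card IB : ℝ) * (Fintype.card OB' : ℝ))))) W = 0 := by
      intro R
      obtain ⟨e, he, hlo⟩ := perturb_localops R
      have h := (H PUnit PUnit PUnit PUnit _ _ hlo uniform_localops).2 PUnit.unit PUnit.unit
      rw [corr_single] at h
      have hsplit : (liftA (constOp IA' OA IA OA' (1 / ((Fintype.card IA : ℝ) * (Fintype.card OA' : ℝ))) + e • LOp R) * liftB (constOp IB' OB IB OB' (1 / ((Fintype.card IB : ℝ) * (Fintype.card OB' : ℝ)))) :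
          WTen IA' OA IB' OB IA OA' IB OB') =
          liftA (constOp IA' OA IA OA' (1 / ((Fintype.card IA : ℝ) * (Fintype.card OA' : ℝ)))) * liftB (constOp IB' OB IB OB' (1 / ((Fintype.card IB : ℝ) * (Fintype.card OB' : ℝ)))) + e • (liftA (LOp R) * liftB (constOp IB' OB IB OB' (1 / ((Fintype.card IB : ℝ) * (Fintype.card OB' : ℝ))))) := by
        funext q1 q2 q3 q4 q5 q6 q7 q8
        simp only [liftA, liftB, constOp, mulW8, addW8, smulW8, addOp4, smulOp4]
        ring
      rw [hsplit, pairP_add_left, pairP_smul_left, hnormUU] at h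
      have h0 : e * pairP (liftA (LOp R) * liftB (constOp IB' OB IB OB' (1 / ((Fintype.card IB : ℝ) * (Fintype.card OB' : ℝ))))) W = 0 := by linarith
      exact (mul_eq_zero.mp h0).resolve_left (ne_of_gt he)
    have keyB : ∀ R' : OpTen IB' OB IB OB',
        pairP (liftA (constOp IA' OA IA OA' (1 / ((Fintype.card IA : ℝ) * (Fintype.card OA' : ℝ)))) * liftB (LOp R')) W = 0 := by
      intro R'
      obtain ⟨e, he, hlo⟩ := perturb_localops R'
      have h := (H PUnit PUnit PUnit PUnit _ _ uniform_localops hlo).2 PUnit.unit PUnit.unit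
      rw [corr_single] at h
      have hsplit : (liftA (constOp IA' OA IA OA' (1 / ((Fintype.card IA : ℝ) * (Fintype.card OA' : ℝ)))) * liftB (constOp IB' OB IB OB' (1 / ((Fintype.card IB : ℝ) * (Fintype.card OB' : ℝ))) + e • LOp R') :
          WTen IA' OA IB' OB IA OA' IB OB') =
          liftA (constOp IA' OA IA OA' (1 / ((Fintype.card IA : ℝ) * (Fintype.card OA' : ℝ)))) * liftB (constOp IB' OB IB OB' (1 / ((Fintype.card IB : ℝ) * (Fintype.card OB' : ℝ)))) + e • (liftA (constOp IA' OA IA OA' (1 / ((Fintype.card IA : ℝ) * (Fintype.card OA' : ℝ)))) * liftB (LOp R')) := by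
        funext q1 q2 q3 q4 q5 q6 q7 q8
        simp only [liftA, liftB, constOp, mulW8, addW8, smulW8, addOp4, smulOp4]
        ring
      rw [hsplit, pairP_add_left, pairP_smul_left, hnormUU] at h
      have h0 : e * pairP (liftA (constOp IA' OA IA OA' (1 / ((Fintype.card IA : ℝ) * (Fintype.card OA' : ℝ)))) * liftB (LOp R')) W = 0 := by linarith
      exact (mul_eq_zero.mp h0).resolve_left (ne_of_gt he)
    have keyAB : ∀ (R : OpTen IA' OA IA OA') (R' : OpTen IB' OB IB OB'),
        pairP (liftA (LOp R) * liftB (LOp R')) W = 0 := by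
      intro R R'
      obtain ⟨e, he, hloA⟩ := perturb_localops R
      obtain ⟨f, hf, hloB⟩ := perturb_localops R'
      have h := (H PUnit PUnit PUnit PUnit _ _ hloA hloB).2 PUnit.unit PUnit.unit
      rw [corr_single] at h
      have hsplit : (liftA (constOp IA' OA IA OA' (1 / ((Fintype.card IA : ℝ) * (Fintype.card OA' : ℝ))) + e • LOp R) * liftB (constOp IB' OB IB OB' (1 / ((Fintype.card IB : ℝ) * (Fintype.card OB' : ℝ))) + f • LOp R') :
          WTen IA' OA IB' OB IA OA' IB OB') =
          liftA (constOp IA' OA IA OA' (1 / ((Fintype.card IA : ℝ) * (Fintype.card OA' : ℝ)))) * liftB (constOp IB' OB IB OB' (1 / ((Fintype.card IB : ℝ) * (Fintype.card OB' : ℝ)))) + e • (liftA (LOp R) * liftB (constOp IB' OB IB OB' (1 / ((Fintype.card IB : ℝ) * (Fintype.card OB' : ℝ))))) +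
          f • (liftA (constOp IA' OA IA OA' (1 / ((Fintype.card IA : ℝ) * (Fintype.card OA' : ℝ)))) * liftB (LOp R')) +
          (e * f) • (liftA (LOp R) * liftB (LOp R')) := by
        funext q1 q2 q3 q4 q5 q6 q7 q8
        simp only [liftA, liftB, constOp, mulW8, addW8, smulW8, addOp4, smulOp4]
        ring
      rw [hsplit, pairP_add_left, pairP_add_left, pairP_add_left, pairP_smul_left,
        pairP_smul_left, pairP_smul_left, hnormUU, keyA R, keyB R'] at h
      have h0 : (e * f) * pairP (liftA (LOp R) * liftB (LOp R')) W = 0 := by linarith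
      exact (mul_eq_zero.mp h0).resolve_left (ne_of_gt (mul_pos he hf))
    refine ⟨?_, ?_, ?_, ?_, ?_⟩
    · intro ia' oa ib' ob ia oa' ib ob'
      have h := (H (IA × OA') (IA' × OA) (IB × OB') (IB' × OB)
        (fun a x => deltaOp4 a.1 a.2 x.1 x.2) (fun b y => deltaOp4 b.1 b.2 y.1 y.2)
        delta_localops delta_localops).1 (ia', oa) (ib', ob) (ia, oa') (ib, ob')
      rwa [corr_delta] at h
    · have h := hnormUU
      rw [pairP_const_mul] at h
      have hne : ((Fintype.card IA : ℝ) * (Fintype.card OA' : ℝ)) *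
          ((Fintype.card IB : ℝ) * (Fintype.card OB' : ℝ)) ≠ 0 := by positivity
      rw [div_mul_div_comm, one_mul, div_mul_eq_mul_div, one_mul,
        div_eq_one_iff_eq hne] at h
      rw [h]
      ring
    · exact extract_rrA_LB W keyB
    · exact extract_rrB_LA W keyA
    · exact extract_LALB W keyAB
  · intro hW X A Y B _ _ _ _ _ _ _ _ TA TB hTA hTB
    constructor
    · intro a b x y
      unfold corr
      refine Finset.sum_nonneg fun ia' _ => Finset.sum_nonneg fun oa _ =>
        Finset.sum_nonneg fun ib' _ => Finset.sum_nonneg fun ob _ =>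
        Finset.sum_nonneg fun ia _ => Finset.sum_nonneg fun oa' _ =>
        Finset.sum_nonneg fun ib _ => Finset.sum_nonneg fun ob' _ => ?_
      exact mul_nonneg (mul_nonneg (hTA.1 a x ia' oa ia oa') (hTB.1 b y ib' ob ib ob'))
        (hW.1 ia' oa ib' ob ia oa' ib ob')
    · intro x y
      rw [corr_sum]
      exact pair_norm W hW _ _ (hTA.2 x) (hTB.2 y)

end Boxworld

end
end

section
/- Let I'_A, I'_B, I_A, I_B, O_A, O_B, O'_A, O'_B be finite nonempty sets. Let P_A : I'_A → ℝ and P_B : I'_B → ℝ be probability distributions (nonnegative entries summing to 1), and let P(o_A, o_B | i_A, i_B) be any conditional probability distribution (nonnegative, with Σ_{o_A, o_B} P(o_A, o_B | i_A, i_B) = 1 for each (i_A, i_B)). Then the tensor W(i'_A, o_A, i'_B, o_B | i_A, o'_A, i_B, o'_B) := P_A(i'_A)·P_B(i'_B)·P(o_A, o_B | i_A, i_B), which is constant in o'_A and o'_B, is a bipartite process tensor. -/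
open Finset
open scoped Classical

noncomputable section

namespace Boxworld

theorem statement_1
    {IA' OA IB' OB IA OA' IB OB' : Type}
    [Fintype IA'] [Fintype OA] [Fintype IB'] [Fintype OB]
    [Fintype IA] [Fintype OA'] [Fintype IB] [Fintype OB']
    [Nonempty IA'] [Nonempty OA] [Nonempty IB'] [Nonempty OB]
    [Nonempty IA] [Nonempty OA'] [Nonempty IB] [Nonempty OB']
    (PA : IA' → ℝ) (PB : IB' → ℝ) (P : OA → OB → IA → IB → ℝ)
    (hPApos : ∀ i, 0 ≤ PA i) (hPAnorm : ∑ i, PA i = 1)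
    (hPBpos : ∀ i, 0 ≤ PB i) (hPBnorm : ∑ i, PB i = 1)
    (hPpos : ∀ oa ob ia ib, 0 ≤ P oa ob ia ib)
    (hPnorm : ∀ ia ib, ∑ oa, ∑ ob, P oa ob ia ib = 1) :
    IsProcessTensor
      (fun ia' oa ib' ob ia _oa' ib _ob' =>
          PA ia' * PB ib' * P oa ob ia ib :
        WTen IA' OA IB' OB IA OA' IB OB') := by

  classical
  have hOBc : (Fintype.card OB : ℝ) ≠ 0 := Nat.cast_ne_zero.mpr Fintype.card_ne_zero
  have hOAc : (Fintype.card OA : ℝ) ≠ 0 := Nat.cast_ne_zero.mpr Fintype.card_ne_zero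
  have hIBc : (Fintype.card IB : ℝ) ≠ 0 := Nat.cast_ne_zero.mpr Fintype.card_ne_zero
  have hIAc : (Fintype.card IA : ℝ) ≠ 0 := Nat.cast_ne_zero.mpr Fintype.card_ne_zero
  set W : WTen IA' OA IB' OB IA OA' IB OB' :=
    (fun ia' oa ib' ob ia _oa' ib _ob' => PA ia' * PB ib' * P oa ob ia ib) with hWdef
  have hOB'W : rrOB' W = W := by
    funext a b c d e f g h
    simp [rrOB', hWdef, Finset.sum_const, Finset.card_univ, nsmul_eq_mul]
  have hOA'W : rrOA' W = W := by
    funext a b c d e f g h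
    simp [rrOA', hWdef, Finset.sum_const, Finset.card_univ, nsmul_eq_mul]
  have hLB : LB W = rrOB W - rrIB (rrOB W) := by
    unfold LB; rw [hOB'W]; abel
  have hLA : LA W = rrOA W - rrIA (rrOA W) := by
    unfold LA; rw [hOA'W]; abel
  have s2 : ∀ e : IA, (∑ oa, ∑ k : IB, ∑ j : OB, P oa j e k) = (Fintype.card IB : ℝ) := by
    intro e
    rw [Finset.sum_comm]
    simp [hPnorm, Finset.card_univ]
  have hPnorm' : ∀ ia ib, ∑ ob, ∑ oa, P oa ob ia ib = 1 := by
    intro ia ib; rw [Finset.sum_comm]; exact hPnorm ia ib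
  have s2' : ∀ g : IB, (∑ ob, ∑ k : IA, ∑ j : OA, P j ob k g) = (Fintype.card IA : ℝ) := by
    intro g
    rw [Finset.sum_comm]
    simp [hPnorm', Finset.card_univ]
  have key1 : rrOA (LB W) = 0 := by
    rw [hLB]
    funext a b c d e f g h
    simp only [rrOA, Pi.sub_apply, rrOB, rrIB, hWdef, Pi.zero_apply]
    simp only [← Finset.mul_sum, mul_div_assoc, ← Finset.sum_div]
    rw [Finset.sum_sub_distrib]
    simp only [← Finset.mul_sum, ← Finset.sum_div]
    rw [hPnorm e g, s2 e]
    field_simp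
    ring
  have key2 : rrOB (LA W) = 0 := by
    rw [hLA]
    funext a b c d e f g h
    simp only [rrOB, Pi.sub_apply, rrOA, rrIA, hWdef, Pi.zero_apply]
    simp only [← Finset.mul_sum, mul_div_assoc, ← Finset.sum_div]
    rw [Finset.sum_sub_distrib]
    simp only [← Finset.mul_sum, ← Finset.sum_div]
    rw [hPnorm' e g, s2' g]
    field_simp
    ring

  have rrIA_zero : rrIA (0 : WTen IA' OA IB' OB IA OA' IB OB') = 0 := by
    funext a b c d e f g h; simp [rrIA]
  have rrIA'_zero : rrIA' (0 : WTen IA' OA IB' OB IA OA' IB OB') = 0 := by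
    funext a b c d e f g h; simp [rrIA']
  have rrIB_zero : rrIB (0 : WTen IA' OA IB' OB IA OA' IB OB') = 0 := by
    funext a b c d e f g h; simp [rrIB]
  have rrIB'_zero : rrIB' (0 : WTen IA' OA IB' OB IA OA' IB OB') = 0 := by
    funext a b c d e f g h; simp [rrIB']
  have hconstB : ∀ a b c d e f f' g h, LB W a b c d e f g h = LB W a b c d e f' g h := by
    intro a b c d e f f' g h; rw [hLB]; rfl
  have hconstA : ∀ a b c d e f g h h', LA W a b c d e f g h = LA W a b c d e f g h' := by
    intro a b c d e f g h h'; rw [hLA]; rfl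
  have hOA'LB : rrOA' (LB W) = LB W := by
    funext a b c d e f g h
    show (∑ j, LB W a b c d e j g h) / (Fintype.card OA' : ℝ) = _
    rw [Finset.sum_congr rfl (fun j _ => hconstB a b c d e j f g h)]
    simp [Finset.sum_const, Finset.card_univ, nsmul_eq_mul]
  have hOB'LA : rrOB' (LA W) = LA W := by
    funext a b c d e f g h
    show (∑ j, LA W a b c d e f g j) / (Fintype.card OB' : ℝ) = _
    rw [Finset.sum_congr rfl (fun j _ => hconstA a b c d e f g j h)]
    simp [Finset.sum_const, Finset.card_univ, nsmul_eq_mul]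
  refine ⟨?_, ?_, ?_, ?_, ?_⟩
  · intro ia' oa ib' ob ia oa' ib ob'
    exact mul_nonneg (mul_nonneg (hPApos _) (hPBpos _)) (hPpos _ _ _ _)
  · simp only [tot, hWdef, Finset.sum_const, Finset.card_univ, nsmul_eq_mul,
      ← Finset.mul_sum, ← Finset.sum_mul]
    have s4 : (∑ i : OA, ∑ i1 : OB, ∑ i2 : IA, ∑ i3 : IB, P i i1 i2 i3)
        = (Fintype.card IA : ℝ) * (Fintype.card IB : ℝ) := by
      have t1 : ∀ i : OA, (∑ i1 : OB, ∑ i2 : IA, ∑ i3 : IB, P i i1 i2 i3)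
          = ∑ i2, ∑ i3, ∑ i1, P i i1 i2 i3 := by
        intro i
        rw [Finset.sum_comm]
        exact Finset.sum_congr rfl fun i2 _ => Finset.sum_comm
      simp only [t1]
      rw [Finset.sum_comm]
      have t2 : ∀ i2 : IA, (∑ i : OA, ∑ i3 : IB, ∑ i1 : OB, P i i1 i2 i3)
          = ∑ i3, ∑ i, ∑ i1, P i i1 i2 i3 := fun i2 => Finset.sum_comm
      simp only [t2, hPnorm, Finset.sum_const, Finset.card_univ, nsmul_eq_mul, mul_one]
    rw [hPAnorm, hPBnorm, s4]
    ring
  · show rrIA' (rrIA (rrOA (rrOA' (LB W)))) = 0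
    rw [hOA'LB, key1, rrIA_zero, rrIA'_zero]
  · show rrIB' (rrIB (rrOB (rrOB' (LA W)))) = 0
    rw [hOB'LA, key2, rrIB_zero, rrIB'_zero]
  · show LB W - rrOA' (LB W) + rrOA (rrOA' (LB W)) - rrIA (rrOA (rrOA' (LB W))) = 0
    rw [hOA'LB, key1, rrIA_zero]
    abel



end Boxworld

end
end

section
/- For every choice of finite nonempty sets A, B, X, Y and every conditional probability distribution P(a, b | x, y) (nonnegative, with Σ_{a,b} P(a, b | x, y) = 1 for each (x, y)), there exist finite nonempty wire index sets I'_A, O_A, I_A, O'_A, I'_B, O_B, I_B, O'_B, a bipartite process tensor W, and sets of probabilistic local operations T^{A|X} on Alice's wires (incoming (I'_A, O_A), outgoing (I_A, O'_A)) and T^{B|Y} on Bob's wires (incoming (I'_B, O_B), outgoing (I_B, O'_B)), such that the contraction (T^{A|X} ⊗ T^{B|Y}) * W over all eight wire indices equals P. In particular, every conditional probability distribution, including the perfect two-way signaling distribution δ_{a,y}·δ_{b,x}, is a process tensor correlation. -/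
/-!
With one-valued primed wires `I'_A, O'_A, I'_B, O'_B`, any box `Q(o_A, o_B | i_A, i_B)` that is
normalized for every pair of inputs is already a process tensor, signaling or not: all three
linear conditions follow from `_{O_A (1 - I_B) O_B} W = 0` and its mirror image, which say that
the sum of `Q` over both outputs does not depend on the inputs. Taking `Q = P` (with outcomes and
inputs relabelled as wire values), each party writes its classical input on the box input wire and
reads its outcome off the box output wire.
-/

open Finset
open scoped Classical

noncomputable section

namespace Boxworld

section BoxTensor

variable {IA' OA IB' OB IA OA' IB OB' : Type}

theorem rrOA'_of_unique [Fintype OA'] [Unique OA'] (W : WTen IA' OA IB' OB IA OA' IB OB') :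
    rrOA' W = W := by
  funext _ _ _ _ _ oa' _ _
  simp [rrOA', Unique.eq_default oa']

theorem rrOB'_of_unique [Fintype OB'] [Unique OB'] (W : WTen IA' OA IB' OB IA OA' IB OB') :
    rrOB' W = W := by
  funext _ _ _ _ _ _ _ ob'
  simp [rrOB', Unique.eq_default ob']

theorem LA_eq_zero_of_rrOA_eq_zero [Fintype OA] [Fintype IA] [Fintype OA'] [Unique OA']
    {V : WTen IA' OA IB' OB IA OA' IB OB'} (h : rrOA V = 0) : LA V = 0 := by
  funext
  simp [LA, rrOA'_of_unique, h, rrIA]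

theorem rrA_eq_zero_of_rrOA_eq_zero [Fintype IA'] [Fintype OA] [Fintype IA] [Fintype OA']
    [Unique OA'] {V : WTen IA' OA IB' OB IA OA' IB OB'} (h : rrOA V = 0) : rrA V = 0 := by
  funext
  simp [rrA, rrOA'_of_unique, h, rrIA, rrIA']

theorem rrB_eq_zero_of_rrOB_eq_zero [Fintype IB'] [Fintype OB] [Fintype IB] [Fintype OB']
    [Unique OB'] {V : WTen IA' OA IB' OB IA OA' IB OB'} (h : rrOB V = 0) : rrB V = 0 := by
  funext
  simp [rrB, rrOB'_of_unique, h, rrIB, rrIB']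

def ofBox (Q : OA → OB → IA → IB → ℝ) : WTen IA' OA IB' OB IA OA' IB OB' :=
  fun _ oa _ ob ia _ ib _ => Q oa ob ia ib

variable {Q : OA → OB → IA → IB → ℝ}

theorem rrOA_LB_ofBox [Fintype OA] [Fintype OB] [Fintype IB] [Nonempty IB] [Fintype OB']
    [Unique OB'] (hQ : ∀ ia ib, ∑ oa, ∑ ob, Q oa ob ia ib = 1) :
    rrOA (LB (ofBox Q : WTen IA' OA IB' OB IA OA' IB OB')) = 0 := by
  have hIB : (Fintype.card IB : ℝ) ≠ 0 := Nat.cast_ne_zero.mpr Fintype.card_ne_zero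
  have hmarg : ∀ ia ib, ∑ oa, (∑ ob, Q oa ob ia ib) / Fintype.card OB = 1 / Fintype.card OB :=
    fun ia ib => by rw [← sum_div, hQ]
  funext _ _ _ _ ia _ ib _
  simp only [LB, rrOB'_of_unique, rrOA, rrOB, rrIB, ofBox, Pi.sub_apply, sub_self, zero_add,
    Pi.zero_apply]
  rw [sum_sub_distrib, hmarg, ← sum_div, sum_comm]
  simp [hmarg, hIB]

theorem rrOB_LA_ofBox [Fintype OA] [Fintype OB] [Fintype IA] [Nonempty IA] [Fintype OA']
    [Unique OA'] (hQ : ∀ ia ib, ∑ ob, ∑ oa, Q oa ob ia ib = 1) :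
    rrOB (LA (ofBox Q : WTen IA' OA IB' OB IA OA' IB OB')) = 0 := by
  have hIA : (Fintype.card IA : ℝ) ≠ 0 := Nat.cast_ne_zero.mpr Fintype.card_ne_zero
  have hmarg : ∀ ia ib, ∑ ob, (∑ oa, Q oa ob ia ib) / Fintype.card OA = 1 / Fintype.card OA :=
    fun ia ib => by rw [← sum_div, hQ]
  funext _ _ _ _ ia _ ib _
  simp only [LA, rrOA'_of_unique, rrOB, rrOA, rrIA, ofBox, Pi.sub_apply, sub_self, zero_add,
    Pi.zero_apply]
  rw [sum_sub_distrib, hmarg, ← sum_div, sum_comm]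
  simp [hmarg, hIA]

theorem tot_ofBox [Fintype IA'] [Fintype OA] [Fintype IB'] [Fintype OB]
    [Fintype IA] [Fintype OA'] [Fintype IB] [Fintype OB']
    [Unique IA'] [Unique OA'] [Unique IB'] [Unique OB']
    (hQ : ∀ ia ib, ∑ oa, ∑ ob, Q oa ob ia ib = 1) :
    tot (ofBox Q : WTen IA' OA IB' OB IA OA' IB OB') =
      (Fintype.card IA : ℝ) * (Fintype.card OA' : ℝ) *
        (Fintype.card IB : ℝ) * (Fintype.card OB' : ℝ) := by
  simp only [tot, ofBox, Fintype.sum_unique]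
  simp_rw [sum_comm (s := (univ : Finset OA)), sum_comm (s := (univ : Finset OB))]
  simp [hQ, Fintype.card_unique]

theorem isProcessTensor_ofBox [Fintype IA'] [Fintype OA] [Fintype IB'] [Fintype OB]
    [Fintype IA] [Fintype OA'] [Fintype IB] [Fintype OB']
    [Unique IA'] [Unique OA'] [Unique IB'] [Unique OB'] [Nonempty IA] [Nonempty IB]
    (hpos : ∀ oa ob ia ib, 0 ≤ Q oa ob ia ib) (hQ : ∀ ia ib, ∑ oa, ∑ ob, Q oa ob ia ib = 1) :
    IsProcessTensor (ofBox Q : WTen IA' OA IB' OB IA OA' IB OB') := by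
  have hA : rrOA (LB (ofBox Q : WTen IA' OA IB' OB IA OA' IB OB')) = 0 := rrOA_LB_ofBox hQ
  have hB : rrOB (LA (ofBox Q : WTen IA' OA IB' OB IA OA' IB OB')) = 0 :=
    rrOB_LA_ofBox fun ia ib => by rw [sum_comm, hQ]
  exact ⟨fun _ oa _ ob ia _ ib _ => hpos oa ob ia ib, tot_ofBox hQ,
    rrA_eq_zero_of_rrOA_eq_zero hA, rrB_eq_zero_of_rrOB_eq_zero hB,
    LA_eq_zero_of_rrOA_eq_zero hA⟩

end BoxTensor

section Relay

variable {I' O I O' A X : Type}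

theorem isDetOp_fixedInput [Fintype I'] [Unique I'] [Fintype O] [Fintype I] [Fintype O']
    [Unique O'] (i₀ : I) :
    IsDetOp (fun (_ : I') (_ : O) i (_ : O') => if i = i₀ then (1 : ℝ) else 0) := by
  refine ⟨by simp [totOp, Fintype.card_unique], ?_, ?_⟩ <;>
  · funext _ o _ _
    have : Nonempty O := ⟨o⟩
    have hO : (Fintype.card O : ℝ) ≠ 0 := Nat.cast_ne_zero.mpr Fintype.card_ne_zero
    simp [rrOpI, rrOpI', rrOpO, rrOpO', Fintype.card_unique, ite_div, hO]

def relayOps (enc : X → I) (dec : O → A) : A → X → OpTen I' O I O' :=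
  fun a x _ o i _ => (if i = enc x then 1 else 0) * (if dec o = a then 1 else 0)

theorem isLocalOps_relayOps [Fintype I'] [Unique I'] [Fintype O] [Fintype I] [Fintype O']
    [Unique O'] [Fintype A] (enc : X → I) (dec : O → A) :
    IsLocalOps (relayOps enc dec : A → X → OpTen I' O I O') := by
  refine ⟨fun a x _ o i _ => by unfold relayOps; positivity, fun x => ?_⟩
  convert isDetOp_fixedInput (I' := I') (O := O) (O' := O') (enc x) using 1
  funext _ o i _
  simp [relayOps]

end Relay

theorem corr_relayOps_ofBox {IA' OA IB' OB IA OA' IB OB' A B X Y : Type}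
    [Fintype IA'] [Fintype OA] [Fintype IB'] [Fintype OB]
    [Fintype IA] [Fintype OA'] [Fintype IB] [Fintype OB']
    [Unique IA'] [Unique OA'] [Unique IB'] [Unique OB']
    (Q : OA → OB → IA → IB → ℝ) (encA : X → IA) (eA : OA ≃ A) (encB : Y → IB) (eB : OB ≃ B)
    (a : A) (b : B) (x : X) (y : Y) :
    corr (relayOps encA eA) (relayOps encB eB) (ofBox Q : WTen IA' OA IB' OB IA OA' IB OB')
      a b x y = Q (eA.symm a) (eB.symm b) (encA x) (encB y) := by
  simp [corr, relayOps, ofBox, ← Equiv.eq_symm_apply]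

theorem exists_fin_succ_equiv (α : Type) [Fintype α] [Nonempty α] :
    ∃ n : ℕ, Nonempty (Fin (n + 1) ≃ α) :=
  ⟨Fintype.card α - 1,
    ⟨(Fintype.equivFinOfCardEq (Nat.sub_one_add_one Fintype.card_ne_zero).symm).symm⟩⟩

theorem statement_2
    (A B X Y : Type) [Fintype A] [Nonempty A] [Fintype B] [Nonempty B]
    [Fintype X] [Nonempty X] [Fintype Y] [Nonempty Y]
    (P : A → B → X → Y → ℝ)
    (hpos : ∀ a b x y, 0 ≤ P a b x y)
    (hnorm : ∀ x y, ∑ a, ∑ b, P a b x y = 1) :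
    ∃ (n1 n2 n3 n4 n5 n6 n7 n8 : ℕ)
      (W : WTen (Fin (n1+1)) (Fin (n2+1)) (Fin (n3+1)) (Fin (n4+1)) (Fin (n5+1)) (Fin (n6+1)) (Fin (n7+1)) (Fin (n8+1)))
      (TA : A → X → OpTen (Fin (n1+1)) (Fin (n2+1)) (Fin (n5+1)) (Fin (n6+1)))
      (TB : B → Y → OpTen (Fin (n3+1)) (Fin (n4+1)) (Fin (n7+1)) (Fin (n8+1))),
      IsProcessTensor W ∧ IsLocalOps TA ∧ IsLocalOps TB ∧
      ∀ a b x y, corr TA TB W a b x y = P a b x y := by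
  obtain ⟨nA, ⟨eA⟩⟩ := exists_fin_succ_equiv A
  obtain ⟨nB, ⟨eB⟩⟩ := exists_fin_succ_equiv B
  obtain ⟨nX, ⟨eX⟩⟩ := exists_fin_succ_equiv X
  obtain ⟨nY, ⟨eY⟩⟩ := exists_fin_succ_equiv Y
  let Q : Fin (nA + 1) → Fin (nB + 1) → Fin (nX + 1) → Fin (nY + 1) → ℝ :=
    fun oa ob ia ib => P (eA oa) (eB ob) (eX ia) (eY ib)
  have hQ : ∀ ia ib, ∑ oa, ∑ ob, Q oa ob ia ib = 1 := fun ia ib =>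
    (Fintype.sum_equiv eA _ _ fun oa =>
      Fintype.sum_equiv eB _ (fun b => P (eA oa) b (eX ia) (eY ib)) fun _ => rfl).trans
      (hnorm (eX ia) (eY ib))
  have : Unique (Fin (0 + 1)) := inferInstanceAs (Unique (Fin 1))
  refine ⟨0, nA, 0, nB, nX, 0, nY, 0, ofBox Q, relayOps eX.symm eA, relayOps eY.symm eB,
    isProcessTensor_ofBox (fun _ _ _ _ => hpos _ _ _ _) hQ, isLocalOps_relayOps _ _,
    isLocalOps_relayOps _ _, fun a b x y => ?_⟩
  simp [corr_relayOps_ofBox, Q]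

end Boxworld

end
end

section
/- There exist finite nonempty wire index sets, a bipartite process tensor W that satisfies the four nonsignaling-preservation conditions (_{O_A(O'_AO'_BI'_AI'_B)}W = _{O_AI_A(O'_AO'_BI'_AI'_B)}W; _{O_B(O'_AO'_BI'_AI'_B)}W = _{O_BI_B(O'_AO'_BI'_AI'_B)}W; _{O_A(1−O'_A+O'_AI'_A−O'_BO'_AI'_A)}W = _{O_AI_A(1−O'_A+O'_AI'_A−O'_BO'_AI'_A)}W; _{O_B(1−O'_B+O'_BI'_B−O'_AO'_BI'_B)}W = _{O_BI_B(1−O'_B+O'_BI'_B−O'_AO'_BI'_B)}W), and sets of probabilistic local operations T^{A|X} and T^{B|Y} with classical sets A = B = X = Y = {0,1}, such that the generated correlations satisfy ((T^{A|X} ⊗ T^{B|Y}) * W)(a, b | x, y) = δ_{a,y}·δ_{b,x} for all a, b, x, y; that is, nonsignaling-preserving process tensors can generate perfect two-way signaling correlations. -/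
open Finset
open scoped Classical

noncomputable section

namespace Boxworld

/-! ### Auxiliary construction for `statement_4` -/

/-- Real-valued equality indicator on `Fin 2`. -/
noncomputable def eq2 (a b : Fin 2) : ℝ := if a = b then 1 else 0

/-- XOR on `Fin 2`. -/
def x2 (a b : Fin 2) : Fin 2 := if a = b then 0 else 1

lemma eq2_nonneg (a b : Fin 2) : 0 ≤ eq2 a b := by
  unfold eq2; split <;> norm_num

/-- The shape of our wire tensors. -/
abbrev W8 : Type := WTen (Fin 2) (Fin 2) (Fin 2) (Fin 2) (Fin 2) (Fin 1) (Fin 2) (Fin 1)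

/-- The two-way-signaling process tensor:
`W = (1/2) δ(i'_A = i'_B) δ(o_A = i_B ⊕ i'_A) δ(o_B = i_A ⊕ i'_B)`. -/
noncomputable def myW : W8 :=
  fun ia' oa ib' ob ia _ ib _ => eq2 ia' ib' * eq2 oa (x2 ib ia') * eq2 ob (x2 ia ib') / 2

/-- The local operation `T^{a|x} = δ(i = x) δ(a = o ⊕ i')`. -/
noncomputable def myT : Fin 2 → Fin 2 → OpTen (Fin 2) (Fin 2) (Fin 2) (Fin 1) :=
  fun a x i' o i _ => eq2 i x * eq2 a (x2 o i')

noncomputable def XA : W8 := fun ia' _ ib' ob ia _ _ _ => eq2 ia' ib' * eq2 ob (x2 ia ib') / 4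
noncomputable def XB : W8 := fun ia' oa ib' _ _ _ ib _ => eq2 ia' ib' * eq2 oa (x2 ib ia') / 4
noncomputable def C8 : W8 := fun ia' _ ib' _ _ _ _ _ => eq2 ia' ib' / 8
noncomputable def PR : W8 := fun _ oa _ ob ia _ ib _ => eq2 (x2 oa ib) (x2 ob ia) / 8
noncomputable def K16 : W8 := fun _ _ _ _ _ _ _ _ => 1/16

lemma rrOA'_id (V : W8) : rrOA' V = V := by
  funext a b c d e f g h
  have hf : f = 0 := Subsingleton.elim _ _
  subst hf
  simp [rrOA', Fin.sum_univ_one]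

lemma rrOB'_id (V : W8) : rrOB' V = V := by
  funext a b c d e f g h
  have hh : h = 0 := Subsingleton.elim _ _
  subst hh
  simp [rrOB', Fin.sum_univ_one]

lemma rrOA_sub (V U : W8) : rrOA (V - U) = rrOA V - rrOA U := by
  funext a b c d e f g h
  simp [rrOA, Finset.sum_sub_distrib, sub_div]

lemma rrOB_sub (V U : W8) : rrOB (V - U) = rrOB V - rrOB U := by
  funext a b c d e f g h
  simp [rrOB, Finset.sum_sub_distrib, sub_div]

lemma rrIA_zero : rrIA (0 : W8) = 0 := by
  funext a b c d e f g h; simp [rrIA]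

lemma rrIA'_zero : rrIA' (0 : W8) = 0 := by
  funext a b c d e f g h; simp [rrIA']

lemma rrIB_zero : rrIB (0 : W8) = 0 := by
  funext a b c d e f g h; simp [rrIB]

lemma rrIB'_zero : rrIB' (0 : W8) = 0 := by
  funext a b c d e f g h; simp [rrIB']

lemma rrOA_zero : rrOA (0 : W8) = 0 := by
  funext a b c d e f g h; simp [rrOA]

lemma rrOB_zero : rrOB (0 : W8) = 0 := by
  funext a b c d e f g h; simp [rrOB]

lemma h1 : rrOA myW = XA := by
  funext a b c d e f g h
  fin_cases a <;> fin_cases g <;>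
    norm_num [rrOA, myW, XA, eq2, x2, Fin.sum_univ_two] <;> ring

lemma h2 : rrIA XA = C8 := by
  funext a b c d e f g h
  fin_cases c <;> fin_cases d <;>
    norm_num [rrIA, XA, C8, eq2, x2, Fin.sum_univ_two] <;> ring

lemma h3 : rrOB myW = XB := by
  funext a b c d e f g h
  fin_cases c <;> fin_cases e <;>
    norm_num [rrOB, myW, XB, eq2, x2, Fin.sum_univ_two] <;> ring

lemma h4 : rrIB XB = C8 := by
  funext a b c d e f g h
  fin_cases a <;> fin_cases b <;>
    norm_num [rrIB, XB, C8, eq2, x2, Fin.sum_univ_two] <;> ring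

lemma h5 : rrOA XB = C8 := by
  funext a b c d e f g h
  fin_cases a <;> fin_cases g <;>
    norm_num [rrOA, XB, C8, eq2, x2, Fin.sum_univ_two] <;> ring

lemma h6 : rrOB XA = C8 := by
  funext a b c d e f g h
  fin_cases c <;> fin_cases e <;>
    norm_num [rrOB, XA, C8, eq2, x2, Fin.sum_univ_two] <;> ring

lemma h7 : rrOA C8 = C8 := by
  funext a b c d e f g h
  norm_num [rrOA, C8, Fin.sum_univ_two] <;> ring

lemma h8 : rrOB C8 = C8 := by
  funext a b c d e f g h
  norm_num [rrOB, C8, Fin.sum_univ_two] <;> ring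

lemma hPrimes : rrPrimes myW = PR := by
  have : rrIA' (rrIB' myW) = PR := by
    funext a b c d e f g h
    fin_cases b <;> fin_cases d <;> fin_cases e <;> fin_cases g <;>
      norm_num [rrIA', rrIB', myW, PR, eq2, x2, Fin.sum_univ_two] <;> ring
  simp only [rrPrimes, this, rrOB'_id, rrOA'_id]

lemma hQPrA : rrOA PR = K16 := by
  funext a b c d e f g h
  fin_cases d <;> fin_cases e <;> fin_cases g <;>
    norm_num [rrOA, PR, K16, eq2, x2, Fin.sum_univ_two] <;> ring

lemma hQPrB : rrOB PR = K16 := by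
  funext a b c d e f g h
  fin_cases b <;> fin_cases e <;> fin_cases g <;>
    norm_num [rrOB, PR, K16, eq2, x2, Fin.sum_univ_two] <;> ring

lemma hIAK : rrIA K16 = K16 := by
  funext a b c d e f g h
  norm_num [rrIA, K16, Fin.sum_univ_two]

lemma hIBK : rrIB K16 = K16 := by
  funext a b c d e f g h
  norm_num [rrIB, K16, Fin.sum_univ_two]

lemma hLA : LA myW = XA - C8 := by
  unfold LA
  rw [rrOA'_id, h1, h2]
  abel

lemma hLB : LB myW = XB - C8 := by
  unfold LB
  rw [rrOB'_id, h3, h4]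
  abel

lemma hMA0 : MA myW = 0 := by
  unfold MA
  rw [rrOA'_id, rrOB'_id]
  abel

lemma hMB0 : MB myW = 0 := by
  unfold MB
  rw [rrOB'_id, rrOA'_id]
  abel
lemma myW_nonneg : Nonneg8 myW := by
  intro a b c d e f g h
  unfold myW
  exact div_nonneg (mul_nonneg (mul_nonneg (eq2_nonneg _ _) (eq2_nonneg _ _)) (eq2_nonneg _ _))
    (by norm_num)

lemma myW_tot : tot myW = (Fintype.card (Fin 2) : ℝ) * (Fintype.card (Fin 1) : ℝ) *
    (Fintype.card (Fin 2) : ℝ) * (Fintype.card (Fin 1) : ℝ) := by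
  norm_num [tot, myW, eq2, x2, Fin.sum_univ_two, Fin.sum_univ_one]

lemma myW_proc : IsProcessTensor myW := by
  refine ⟨myW_nonneg, myW_tot, ?_, ?_, ?_⟩
  · simp only [rrA, hLB, rrOA'_id, rrOA_sub, h5, h7, sub_self, rrIA_zero, rrIA'_zero]
  · simp only [rrB, hLA, rrOB'_id, rrOB_sub, h6, h8, sub_self, rrIB_zero, rrIB'_zero]
  · unfold LA
    rw [hLB, rrOA'_id, rrOA_sub, h5, h7]
    simp only [sub_self, rrIA_zero]
    abel

lemma myW_nsp : SatisfiesNSP myW := by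
  refine ⟨?_, ?_, ?_, ?_⟩
  · rw [hPrimes, hQPrA, hIAK]
  · rw [hPrimes, hQPrB, hIBK]
  · rw [hMA0, rrOA_zero, rrIA_zero]
  · rw [hMB0, rrOB_zero, rrIB_zero]

lemma myT_local : IsLocalOps myT := by
  constructor
  · intro a x i' o i o'
    exact mul_nonneg (eq2_nonneg _ _) (eq2_nonneg _ _)
  · intro x
    refine ⟨?_, ?_, ?_⟩
    · fin_cases x <;>
        norm_num [totOp, myT, eq2, x2, Fin.sum_univ_two, Fin.sum_univ_one]
    · funext i' o i o'
      fin_cases x <;> fin_cases i' <;> fin_cases o <;>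
        norm_num [rrOpI, rrOpI', rrOpO, rrOpO', myT, eq2, x2,
          Fin.sum_univ_two, Fin.sum_univ_one] <;> ring
    · funext i' o i o'
      fin_cases x <;> fin_cases i' <;> fin_cases o <;> fin_cases i <;>
        norm_num [rrOpO, rrOpO', myT, eq2, x2, Fin.sum_univ_two, Fin.sum_univ_one] <;> ring

lemma my_corr : ∀ a b x y : Fin 2, corr myT myT myW a b x y =
    (if a = y then (1 : ℝ) else 0) * (if b = x then (1 : ℝ) else 0) := by
  intro a b x y
  fin_cases a <;> fin_cases b <;> fin_cases x <;> fin_cases y <;>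
    norm_num [corr, myT, myW, eq2, x2, Fin.sum_univ_two, Fin.sum_univ_one]
theorem statement_4 :
    ∃ (n1 n2 n3 n4 n5 n6 n7 n8 : ℕ)
      (W : WTen (Fin (n1+1)) (Fin (n2+1)) (Fin (n3+1)) (Fin (n4+1)) (Fin (n5+1)) (Fin (n6+1)) (Fin (n7+1)) (Fin (n8+1)))
      (TA : Fin 2 → Fin 2 → OpTen (Fin (n1+1)) (Fin (n2+1)) (Fin (n5+1)) (Fin (n6+1)))
      (TB : Fin 2 → Fin 2 → OpTen (Fin (n3+1)) (Fin (n4+1)) (Fin (n7+1)) (Fin (n8+1))),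
      IsProcessTensor W ∧ SatisfiesNSP W ∧ IsLocalOps TA ∧ IsLocalOps TB ∧
      ∀ a b x y : Fin 2, corr TA TB W a b x y =
        (if a = y then (1 : ℝ) else 0) * (if b = x then (1 : ℝ) else 0) := by
  exact ⟨1, 1, 1, 1, 1, 0, 1, 0, myW, myT, myT,
    myW_proc, myW_nsp, myT_local, myT_local, my_corr⟩

end Boxworld

end
end

section
/- Let I', O, I, O', X be finite nonempty sets, and let f : I' × X → I and g : I' × O × X → O' be functions (defining the deterministic local operation T^x(i, o' | i', o) = δ_{i, f(i',x)}·δ_{o', g(i',o,x)}). Then the following are equivalent: (i) for every i' ∈ I' and every function h : I → O, the map x ↦ g(i', h(f(i', x)), x) is constant on X; (ii) for every i' ∈ I', the value g(i', o, x) does not depend on x, and moreover either the map x ↦ f(i', x) is constant or g(i', o, x) does not depend on o. That is, a deterministic local operation is nonsignaling (its action on every box is independent of the classical input X) exactly when its post-processing function is independent of X and, wherever the pre-processing depends on X, the post-processing is also independent of the box output O. -/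
theorem statement_5 {I' O I O' X : Type}
    [Fintype I'] [Nonempty I'] [Fintype O] [Nonempty O]
    [Fintype I] [Nonempty I] [Fintype O'] [Nonempty O'] [Fintype X] [Nonempty X]
    (f : I' × X → I) (g : I' × O × X → O') :
    (∀ (i' : I') (h : I → O) (x x' : X),
        g (i', h (f (i', x)), x) = g (i', h (f (i', x')), x')) ↔
      (∀ i' : I',
        (∀ (o : O) (x x' : X), g (i', o, x) = g (i', o, x')) ∧
        ((∀ x x' : X, f (i', x) = f (i', x')) ∨
          (∀ (o o' : O) (x : X), g (i', o, x) = g (i', o', x)))) := by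
  classical
  constructor
  · intro H i'
    have hg : ∀ (o : O) (x x' : X), g (i', o, x) = g (i', o, x') := by
      intro o x x'
      simpa using H i' (fun _ => o) x x'
    refine ⟨hg, ?_⟩
    by_cases hf : ∀ x x' : X, f (i', x) = f (i', x')
    · exact Or.inl hf
    · right
      push_neg at hf
      obtain ⟨x0, x1, hne⟩ := hf
      intro o o' x
      have := H i' (fun i => if i = f (i', x0) then o else o') x0 x1
      rw [if_pos rfl, if_neg (Ne.symm hne)] at this
      calc g (i', o, x) = g (i', o, x0) := hg o x x0
        _ = g (i', o', x1) := this
        _ = g (i', o', x) := hg o' x1 x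
  · intro H i' h x x'
    obtain ⟨hg, hfo⟩ := H i'
    rcases hfo with hf | ho
    · rw [hf x x']; exact hg _ x x'
    · calc g (i', h (f (i', x)), x) = g (i', h (f (i', x)), x') := hg _ x x'
        _ = g (i', h (f (i', x')), x') := ho _ _ x'
end

section
/- Let W be a bipartite process tensor. Call a set of probabilistic local operations T̄^{A|X} (on wires incoming (I', O), outgoing (I, O')) nonsignaling if T̄^x := Σ_a T̄^{a|x} has one of the two forms: (case 1) T̄^x is the same tensor for every x; or (case 2) there exist convex weights π_λ ≥ 0 with Σ_λ π_λ = 1 and functions f_λ : I' × X → I, g_λ : I' → O' such that T̄^x(i, o' | i', o) = Σ_λ π_λ·δ_{i, f_λ(i', x)}·δ_{o', g_λ(i')}. Then the following are equivalent: (i) for every pair of nonsignaling sets of probabilistic local operations T̄^{A|X} on Alice's wires and T̄^{B|Y} on Bob's wires, the correlations P = (T̄^{A|X} ⊗ T̄^{B|Y}) * W are nonsignaling, i.e. Σ_b P(a, b | x, y) is independent of y and Σ_a P(a, b | x, y) is independent of x; (ii) _{O_A}W = _{I_AO_A}W and _{O_B}W = _{I_BO_B}W. -/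
open Finset
open scoped Classical

noncomputable section

namespace Boxworld

/-!
Bob's marginal `∑ a, P(a, b | x, y)` sees Alice's operations only through her deterministic
operation `T̄ˣ`. In case 1 this does not depend on `x` at all. In case 2, contracting `T̄ˣ` with
`W` only evaluates the `O_A`-marginal of `W` at the inputs `I_A = f_λ(i'_A, x)` and
`O'_A = g_λ(i'_A)`, so `x` drops out as soon as that marginal does not depend on `I_A`; this
is the condition `_{O_A}W = _{I_A O_A}W`. Conversely, if Alice feeds her input `x` into `I_A`
only when `I'_A = i'_A` and Bob measures `(I'_B, O_B)`, nonsignaling from Alice to Bob says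
exactly that this marginal takes the same value at all `I_A`. Bob's half of the statement
follows by exchanging the two parties.
-/

theorem sum_comm₂₂ {M α β γ δ : Type*} [AddCommMonoid M] [Fintype α] [Fintype β] [Fintype γ]
    [Fintype δ] (f : α → β → γ → δ → M) :
    ∑ a, ∑ b, ∑ c, ∑ d, f a b c d = ∑ c, ∑ d, ∑ a, ∑ b, f a b c d :=
  calc _ = ∑ p : α × β, ∑ q : γ × δ, f p.1 p.2 q.1 q.2 := by simp only [Fintype.sum_prod_type]
    _ = ∑ q : γ × δ, ∑ p : α × β, f p.1 p.2 q.1 q.2 := Finset.sum_comm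
    _ = _ := by simp only [Fintype.sum_prod_type]

theorem sum_comm₁₄ {M α β γ δ ε : Type*} [AddCommMonoid M] [Fintype α] [Fintype β]
    [Fintype γ] [Fintype δ] [Fintype ε] (f : α → β → γ → δ → ε → M) :
    ∑ a, ∑ b, ∑ c, ∑ d, ∑ e, f a b c d e = ∑ b, ∑ c, ∑ d, ∑ e, ∑ a, f a b c d e :=
  calc _ = ∑ a, ∑ p : β × γ × δ × ε, f a p.1 p.2.1 p.2.2.1 p.2.2.2 := by
        simp only [Fintype.sum_prod_type]
    _ = ∑ p : β × γ × δ × ε, ∑ a, f a p.1 p.2.1 p.2.2.1 p.2.2.2 := Finset.sum_comm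
    _ = _ := by simp only [Fintype.sum_prod_type]

theorem sum_const_div_card {K α : Type*} [Semifield K] [CharZero K] [Fintype α] (a : α)
    (c : K) : (∑ _ : α, c) / Fintype.card α = c := by
  have : (Fintype.card α : K) ≠ 0 := Nat.cast_ne_zero.mpr (Fintype.card_pos_iff.2 ⟨a⟩).ne'
  rw [Finset.sum_const, Finset.card_univ, nsmul_eq_mul, mul_div_cancel_left₀ c this]

theorem eq_of_sum_eq_of_forall_ne {M α : Type*} [AddCancelCommMonoid M] [Fintype α]
    {f g : α → M} (a : α) (hfg : ∀ j ≠ a, f j = g j) (h : ∑ j, f j = ∑ j, g j) :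
    f a = g a := by
  rw [Fintype.sum_eq_add_sum_compl a, Fintype.sum_eq_add_sum_compl a g,
    Finset.sum_congr rfl fun j hj => hfg j (Finset.mem_compl.1 hj ∘ Finset.mem_singleton.2)] at h
  exact add_right_cancel h

section Operations

variable {I' O I O' : Type}

def deltaOp (f : I' → I) (g : I' → O') : OpTen I' O I O' :=
  fun i' _ i o' => (if i = f i' then (1 : ℝ) else 0) * (if o' = g i' then (1 : ℝ) else 0)

theorem deltaOp_nonneg (f : I' → I) (g : I' → O') (i' : I') (o : O) (i : I) (o' : O') :
    0 ≤ deltaOp f g i' o i o' := by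
  unfold deltaOp; positivity

variable [Fintype I'] [Fintype O] [Fintype I] [Fintype O']

theorem isDetOp_deltaOp (f : I' → I) (g : I' → O') : IsDetOp (deltaOp (O := O) f g) := by
  refine ⟨by simp [totOp, deltaOp, mul_comm], ?_, ?_⟩ <;> funext i' o i o' <;>
  · have : Nonempty I' := ⟨i'⟩
    have : Nonempty O := ⟨o⟩
    simp [rrOpI, rrOpO', rrOpI', rrOpO, deltaOp, ite_div]

theorem sum_deltaOp_mul (f : I' → I) (g : I' → O') (V : I' → O → I → O' → ℝ) :
    ∑ i', ∑ o, ∑ i, ∑ o', deltaOp f g i' o i o' * V i' o i o'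
      = ∑ i', ∑ o, V i' o (f i') (g i') := by
  simp [deltaOp, ite_mul]

theorem sum_convex_deltaOp_mul {m : ℕ} (π : Fin m → ℝ) (f : Fin m → I' → I)
    (g : Fin m → I' → O') (V : I' → O → I → O' → ℝ) :
    ∑ i', ∑ o, ∑ i, ∑ o', (∑ l, π l * deltaOp (f l) (g l) i' o i o') * V i' o i o'
      = ∑ l, π l * ∑ i', ∑ o, V i' o (f l i') (g l i') := by
  simp only [← sum_deltaOp_mul, Finset.mul_sum, Finset.sum_mul, mul_assoc]
  exact (sum_comm₁₄ _).symm

variable {A X : Type} [Fintype A]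

theorem sum_mul_eq_of_isNSLocalOps {T : A → X → OpTen I' O I O'} (hT : IsNSLocalOps T)
    {V : I' → O → I → O' → ℝ} (hV : ∀ i' o' i₁ i₂, ∑ o, V i' o i₁ o' = ∑ o, V i' o i₂ o')
    (x x' : X) :
    ∑ i', ∑ o, ∑ i, ∑ o', (∑ a, T a x i' o i o') * V i' o i o'
      = ∑ i', ∑ o, ∑ i, ∑ o', (∑ a, T a x' i' o i o') * V i' o i o' := by
  obtain hconst | ⟨m, π, f, g, -, -, hconvex⟩ := hT.2
  · simp only [hconst x x']
  · have key : ∀ x, ∑ i', ∑ o, ∑ i, ∑ o', (∑ a, T a x i' o i o') * V i' o i o'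
        = ∑ l, π l * ∑ i', ∑ o, V i' o (f l i' x) (g l i') := fun x => by
      simp only [hconvex]
      exact sum_convex_deltaOp_mul π (fun l i' => f l i' x) g V
    rw [key, key]
    exact Finset.sum_congr rfl fun l _ =>
      congrArg (π l * ·) (Finset.sum_congr rfl fun i' _ => hV i' (g l i') _ _)

theorem isNSLocalOps_of_sum_eq_deltaOp {T : A → X → OpTen I' O I O'}
    (hT₀ : ∀ a x i' o i o', 0 ≤ T a x i' o i o') (F : I' → X → I) (G : I' → O')
    (hT : ∀ x i' o i o', ∑ a, T a x i' o i o' = deltaOp (F · x) G i' o i o') :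
    IsNSLocalOps T := by
  refine ⟨⟨hT₀, fun x => ?_⟩, Or.inr ⟨1, fun _ => 1, fun _ => F, fun _ => G, by simp, by simp,
    fun x i' o i o' => by simp [hT, deltaOp]⟩⟩
  simpa only [hT] using isDetOp_deltaOp (O := O) (F · x) G

def measOp (F : I' → X → I) (G : I' → O') : I' × O → X → OpTen I' O I O' :=
  fun a x i' o i o' => if (i', o) = a then deltaOp (F · x) G i' o i o' else 0

theorem isNSLocalOps_measOp (F : I' → X → I) (G : I' → O') :
    IsNSLocalOps (measOp (O := O) F G) := by
  refine isNSLocalOps_of_sum_eq_deltaOp (fun a x i' o i o' => ?_) F G fun x i' o i o' => ?_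
  · unfold measOp
    split_ifs
    exacts [deltaOp_nonneg _ _ _ _ _ _, le_rfl]
  · simp [measOp]

end Operations

section Parties

variable {IA' OA IB' OB IA OA' IB OB' : Type}

def swapParties (W : WTen IA' OA IB' OB IA OA' IB OB') : WTen IB' OB IA' OA IB OB' IA OA' :=
  fun ib' ob ia' oa ib ob' ia oa' => W ia' oa ib' ob ia oa' ib ob'

theorem swapParties_injective :
    Function.Injective (swapParties : WTen IA' OA IB' OB IA OA' IB OB' → _) :=
  Function.LeftInverse.injective (g := swapParties) fun _ => rfl

variable [Fintype IA'] [Fintype OA] [Fintype IB'] [Fintype OB]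
variable [Fintype IA] [Fintype OA'] [Fintype IB] [Fintype OB']
variable {A X B Y : Type}

theorem corr_swapParties (TA : A → X → OpTen IA' OA IA OA') (TB : B → Y → OpTen IB' OB IB OB')
    (W : WTen IA' OA IB' OB IA OA' IB OB') (a : A) (b : B) (x : X) (y : Y) :
    corr TB TA (swapParties W) b a y x = corr TA TB W a b x y := by
  unfold corr swapParties
  rw [sum_comm₂₂]
  refine Finset.sum_congr rfl fun _ _ => Finset.sum_congr rfl fun _ _ =>
    Finset.sum_congr rfl fun _ _ => Finset.sum_congr rfl fun _ _ => ?_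
  rw [sum_comm₂₂]
  simp only [mul_comm (TB _ _ _ _ _ _)]

theorem corr_eq_sum_mul_sum (TA : A → X → OpTen IA' OA IA OA')
    (TB : B → Y → OpTen IB' OB IB OB') (W : WTen IA' OA IB' OB IA OA' IB OB')
    (a : A) (b : B) (x : X) (y : Y) :
    corr TA TB W a b x y = ∑ ib', ∑ ob, ∑ ib, ∑ ob', TB b y ib' ob ib ob' *
      ∑ ia', ∑ oa, ∑ ia, ∑ oa', TA a x ia' oa ia oa' * W ia' oa ib' ob ia oa' ib ob' := by
  rw [← corr_swapParties]
  unfold corr swapParties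
  refine Finset.sum_congr rfl fun _ _ => Finset.sum_congr rfl fun _ _ => ?_
  rw [sum_comm₂₂]
  simp only [Finset.mul_sum, mul_assoc]

theorem sum_corr_eq_sum_mul_sum [Fintype A] (TA : A → X → OpTen IA' OA IA OA')
    (TB : B → Y → OpTen IB' OB IB OB') (W : WTen IA' OA IB' OB IA OA' IB OB')
    (b : B) (x : X) (y : Y) :
    ∑ a, corr TA TB W a b x y = ∑ ib', ∑ ob, ∑ ib, ∑ ob', TB b y ib' ob ib ob' *
      ∑ ia', ∑ oa, ∑ ia, ∑ oa', (∑ a, TA a x ia' oa ia oa') * W ia' oa ib' ob ia oa' ib ob' := by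
  simp only [corr_eq_sum_mul_sum, Finset.sum_mul, Finset.mul_sum]
  rw [sum_comm₁₄]
  refine Finset.sum_congr rfl fun _ _ => Finset.sum_congr rfl fun _ _ =>
    Finset.sum_congr rfl fun _ _ => Finset.sum_congr rfl fun _ _ => ?_
  exact sum_comm₁₄ _

end Parties

section NoSignaling

variable {IA' OA IB' OB IA OA' IB OB' : Type} [Fintype OA] [Fintype IA]

theorem sum_eq_sum_of_rrOA_eq {W : WTen IA' OA IB' OB IA OA' IB OB'}
    (hW : rrOA W = rrIA (rrOA W)) (ia' : IA') (ib' : IB') (ob : OB) (oa' : OA') (ib : IB)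
    (ob' : OB') (ia₁ ia₂ : IA) :
    ∑ oa, W ia' oa ib' ob ia₁ oa' ib ob' = ∑ oa, W ia' oa ib' ob ia₂ oa' ib ob' := by
  obtain _ | ⟨⟨oa⟩⟩ := isEmpty_or_nonempty OA
  · simp [Finset.univ_eq_empty]
  have h₁ := congrArg (· ia' oa ib' ob ia₁ oa' ib ob') hW
  have h₂ := congrArg (· ia' oa ib' ob ia₂ oa' ib ob') hW
  have hOA : (Fintype.card OA : ℝ) ≠ 0 := Nat.cast_ne_zero.2 (Fintype.card_pos_iff.2 ⟨oa⟩).ne'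
  exact (div_left_inj' hOA).1 (h₁.trans h₂.symm)

variable [Fintype IA'] [Fintype IB'] [Fintype OB] [Fintype OA'] [Fintype IB] [Fintype OB']

theorem corr_deltaOp_measOp {X Y : Type} (FA : IA' → X → IA) (GA : IA' → OA')
    (FB : IB' → Y → IB) (GB : IB' → OB') (W : WTen IA' OA IB' OB IA OA' IB OB')
    (u : Unit) (ib' : IB') (ob : OB) (x : X) (y : Y) :
    corr (fun _ x => deltaOp (O := OA) (FA · x) GA) (measOp FB GB) W u (ib', ob) x y
      = ∑ ia', ∑ oa, W ia' oa ib' ob (FA ia' x) (GA ia') (FB ib' y) (GB ib') := by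
  simp [corr, deltaOp, measOp, ite_mul, mul_ite, ite_and]

def NoSignalingFromA (W : WTen IA' OA IB' OB IA OA' IB OB') : Prop :=
  ∀ (X A Y B : Type) [Fintype X] [Nonempty X] [Fintype A] [Nonempty A]
    [Fintype Y] [Nonempty Y] [Fintype B] [Nonempty B]
    (TA : A → X → OpTen IA' OA IA OA') (TB : B → Y → OpTen IB' OB IB OB'),
    IsNSLocalOps TA → IsNSLocalOps TB →
    ∀ b x x' y, ∑ a, corr TA TB W a b x y = ∑ a, corr TA TB W a b x' y

theorem noSignalingFromA_of_rrOA_eq {W : WTen IA' OA IB' OB IA OA' IB OB'}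
    (hW : rrOA W = rrIA (rrOA W)) : NoSignalingFromA W := by
  intro X A Y B _ _ _ _ _ _ _ _ TA TB hTA _ b x x' y
  simp only [sum_corr_eq_sum_mul_sum]
  refine Finset.sum_congr rfl fun ib' _ => Finset.sum_congr rfl fun ob _ =>
    Finset.sum_congr rfl fun ib _ => Finset.sum_congr rfl fun ob' _ => ?_
  rw [sum_mul_eq_of_isNSLocalOps hTA (sum_eq_sum_of_rrOA_eq hW · ib' ob · ib ob') x x']

theorem sum_eq_sum_of_noSignalingFromA {W : WTen IA' OA IB' OB IA OA' IB OB'}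
    (hW : NoSignalingFromA W) (ia'₀ : IA') (ib' : IB') (ob : OB) (oa' : OA') (ib : IB)
    (ob' : OB') (ia₁ ia₂ : IA) :
    ∑ oa, W ia'₀ oa ib' ob ia₁ oa' ib ob' = ∑ oa, W ia'₀ oa ib' ob ia₂ oa' ib ob' := by
  have : Nonempty IA := ⟨ia₁⟩
  have : Nonempty (IB' × OB) := ⟨(ib', ob)⟩
  let F : IA' → IA → IA := fun ia' x => if ia' = ia'₀ then x else ia₁
  have h := hW IA Unit Unit (IB' × OB) (fun _ x => deltaOp (F · x) fun _ => oa')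
    (measOp (fun _ _ => ib) fun _ => ob')
    (isNSLocalOps_of_sum_eq_deltaOp (fun _ _ _ _ _ _ => deltaOp_nonneg _ _ _ _ _ _) F _
      fun _ _ _ _ _ => Fintype.sum_unique _)
    (isNSLocalOps_measOp _ _) (ib', ob) ia₁ ia₂ ()
  simp only [Fintype.sum_unique, corr_deltaOp_measOp] at h
  simpa [F] using eq_of_sum_eq_of_forall_ne ia'₀ (fun j hj => by simp [F, hj]) h

theorem rrOA_eq_of_noSignalingFromA {W : WTen IA' OA IB' OB IA OA' IB OB'}
    (hW : NoSignalingFromA W) : rrOA W = rrIA (rrOA W) := by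
  funext ia' oa ib' ob ia oa' ib ob'
  simp only [rrOA, rrIA, sum_eq_sum_of_noSignalingFromA hW ia' ib' ob oa' ib ob' _ ia]
  exact (sum_const_div_card ia _).symm

theorem noSignalingFromA_iff (W : WTen IA' OA IB' OB IA OA' IB OB') :
    NoSignalingFromA W ↔ rrOA W = rrIA (rrOA W) :=
  ⟨rrOA_eq_of_noSignalingFromA, noSignalingFromA_of_rrOA_eq⟩

theorem noSignalingFromA_swapParties_iff (W : WTen IA' OA IB' OB IA OA' IB OB') :
    NoSignalingFromA (swapParties W) ↔ rrOB W = rrIB (rrOB W) :=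
  (noSignalingFromA_iff _).trans swapParties_injective.eq_iff

end NoSignaling

theorem statement_6_general
    {IA' OA IB' OB IA OA' IB OB' : Type}
    [Fintype IA'] [Fintype OA] [Fintype IB'] [Fintype OB]
    [Fintype IA] [Fintype OA'] [Fintype IB] [Fintype OB']
    (W : WTen IA' OA IB' OB IA OA' IB OB') :
    (∀ (X A Y B : Type) [Fintype X] [Nonempty X] [Fintype A] [Nonempty A]
        [Fintype Y] [Nonempty Y] [Fintype B] [Nonempty B]
        (TA : A → X → OpTen IA' OA IA OA') (TB : B → Y → OpTen IB' OB IB OB'),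
        IsNSLocalOps TA → IsNSLocalOps TB →
        ((∀ a x y y', ∑ b, corr TA TB W a b x y = ∑ b, corr TA TB W a b x y') ∧
          (∀ b x x' y, ∑ a, corr TA TB W a b x y = ∑ a, corr TA TB W a b x' y))) ↔
      (rrOA W = rrIA (rrOA W) ∧ rrOB W = rrIB (rrOB W)) := by
  rw [← noSignalingFromA_iff, ← noSignalingFromA_swapParties_iff]
  constructor
  · intro h
    refine ⟨fun X A Y B _ _ _ _ _ _ _ _ TA TB hTA hTB => (h X A Y B TA TB hTA hTB).2,
      fun Y B X A _ _ _ _ _ _ _ _ TB TA hTB hTA a y y' x => ?_⟩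
    simpa only [corr_swapParties] using (h X A Y B TA TB hTA hTB).1 a x y y'
  · rintro ⟨hA, hB⟩ X A Y B _ _ _ _ _ _ _ _ TA TB hTA hTB
    refine ⟨fun a x y y' => ?_, hA X A Y B TA TB hTA hTB⟩
    simpa only [corr_swapParties] using hB Y B X A TB TA hTB hTA a y y' x

theorem statement_6
    {IA' OA IB' OB IA OA' IB OB' : Type}
    [Fintype IA'] [Fintype OA] [Fintype IB'] [Fintype OB]
    [Fintype IA] [Fintype OA'] [Fintype IB] [Fintype OB']
    [Nonempty IA'] [Nonempty OA] [Nonempty IB'] [Nonempty OB]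
    [Nonempty IA] [Nonempty OA'] [Nonempty IB] [Nonempty OB']
    (W : WTen IA' OA IB' OB IA OA' IB OB') (hW : IsProcessTensor W) :
    (∀ (X A Y B : Type) [Fintype X] [Nonempty X] [Fintype A] [Nonempty A]
        [Fintype Y] [Nonempty Y] [Fintype B] [Nonempty B]
        (TA : A → X → OpTen IA' OA IA OA') (TB : B → Y → OpTen IB' OB IB OB'),
        IsNSLocalOps TA → IsNSLocalOps TB →
        ((∀ a x y y', ∑ b, corr TA TB W a b x y = ∑ b, corr TA TB W a b x y') ∧
          (∀ b x x' y, ∑ a, corr TA TB W a b x y = ∑ a, corr TA TB W a b x' y))) ↔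
      (rrOA W = rrIA (rrOA W) ∧ rrOB W = rrIB (rrOB W)) :=
  statement_6_general W

end Boxworld

end
end
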